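/- arXiv:math/0107102 — 17 statements merged into one kernel-verified Lean document; each statement's English description precedes it below -/
import Mathlib

section
/- Let L = (L_n)_{n≥0} be an increasing sequence of positive real numbers with L_0 = 1 satisfying condition (i4). Then lim_{n→∞} (L_{n+1}/L_n)^{1/n} = 1. -/
open Filter

/-- Condition (i4) for a sequence of positive reals. -/
def CondI4 (L : ℕ → ℝ) : Prop :=
  ∀ δ : ℝ, 0 < δ → ∃ p : ℝ, 0 < p ∧ ∃ t : ℝ, 1 < t ∧
    ∀ n m : ℕ, L (m + n) / (L m * (1 + δ) ^ m) ≤ p * t ^ n * L n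

theorem stmt_0 (L : ℕ → ℝ) (hpos : ∀ n, 0 < L n) (hmono : Monotone L)
    (hL0 : L 0 = 1) (hI4 : CondI4 L) :
    Tendsto (fun n : ℕ => (L (n + 1) / L n) ^ ((1 : ℝ) / n)) atTop (nhds 1) := by
  rw [Metric.tendsto_atTop]
  intro ε hε
  have hδ : (0 : ℝ) < ε / 2 := by positivity
  set δ : ℝ := ε / 2 with hδdef
  obtain ⟨p, hp, t, ht, hb⟩ := hI4 δ hδ
  have ht0 : 0 < t := lt_trans one_pos ht
  set C : ℝ := max (p * t * L 1) 1 with hCdef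
  have hC1 : (1 : ℝ) ≤ C := le_max_right _ _
  have hC0 : (0 : ℝ) < C := lt_of_lt_of_le one_pos hC1
  have hδpos : (0 : ℝ) < 1 + δ := by linarith
  have hkey : ∀ m : ℕ, L (m + 1) / L m ≤ C * (1 + δ) ^ m := by
    intro m
    have h := hb 1 m
    rw [pow_one] at h
    have h1 : L (m + 1) / L m / (1 + δ) ^ m ≤ p * t * L 1 := by
      rw [div_div]
      calc L (m + 1) / (L m * (1 + δ) ^ m) ≤ p * t ^ 1 * L 1 := by
            simpa using h
        _ = p * t * L 1 := by ring
    have h2 : L (m + 1) / L m ≤ p * t * L 1 * (1 + δ) ^ m := by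
      rw [div_le_iff₀ (by positivity : (0:ℝ) < (1 + δ) ^ m)] at h1
      exact h1
    calc L (m + 1) / L m ≤ p * t * L 1 * (1 + δ) ^ m := h2
      _ ≤ C * (1 + δ) ^ m :=
        mul_le_mul_of_nonneg_right (le_max_left _ _) (by positivity)
  -- the bounding sequence tends to 1 + δ
  have hg : Tendsto (fun n : ℕ => C ^ ((1 : ℝ) / n) * (1 + δ)) atTop
      (nhds (1 + δ)) := by
    have h1 : Tendsto (fun n : ℕ => (1 : ℝ) / n) atTop (nhds 0) :=
      tendsto_one_div_atTop_nhds_zero_nat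
    have h2 : Tendsto (fun n : ℕ => C ^ ((1 : ℝ) / n)) atTop (nhds (C ^ (0:ℝ))) :=
      Filter.Tendsto.rpow tendsto_const_nhds h1 (Or.inl hC0.ne')
    rw [Real.rpow_zero] at h2
    simpa using h2.mul_const (1 + δ)
  have hlt : (1 : ℝ) + δ < 1 + ε := by rw [hδdef]; linarith
  have hev : ∀ᶠ n : ℕ in atTop, C ^ ((1 : ℝ) / n) * (1 + δ) < 1 + ε :=
    hg.eventually_lt_const hlt
  rw [eventually_atTop] at hev
  obtain ⟨N, hN⟩ := hev
  refine ⟨max N 1, fun n hn => ?_⟩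
  have hnN : N ≤ n := le_trans (le_max_left _ _) hn
  have hn1 : 1 ≤ n := le_trans (le_max_right _ _) hn
  have hnR : (0 : ℝ) < (n : ℝ) := by exact_mod_cast hn1
  have hbase : (1 : ℝ) ≤ L (n + 1) / L n :=
    (one_le_div (hpos n)).mpr (hmono (Nat.le_succ n))
  have hf1 : (1 : ℝ) ≤ (L (n + 1) / L n) ^ ((1 : ℝ) / n) := by
    have := Real.rpow_le_rpow zero_le_one hbase (by positivity : (0:ℝ) ≤ 1 / n)
    simpa using this
  have hfub : (L (n + 1) / L n) ^ ((1 : ℝ) / n) ≤ C ^ ((1 : ℝ) / n) * (1 + δ) := by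
    have hstep : (L (n + 1) / L n) ^ ((1 : ℝ) / n) ≤
        (C * (1 + δ) ^ n) ^ ((1 : ℝ) / n) :=
      Real.rpow_le_rpow (by positivity) (hkey n) (by positivity)
    have heq : (C * (1 + δ) ^ n) ^ ((1 : ℝ) / n) = C ^ ((1 : ℝ) / n) * (1 + δ) := by
      rw [Real.mul_rpow hC0.le (by positivity), ← Real.rpow_natCast (1 + δ) n,
        ← Real.rpow_mul hδpos.le]
      congr 1
      rw [mul_one_div, div_self hnR.ne']
      exact Real.rpow_one _
    rw [heq] at hstep
    exact hstep
  have hub : (L (n + 1) / L n) ^ ((1 : ℝ) / n) < 1 + ε :=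
    lt_of_le_of_lt hfub (hN n hnN)
  rw [Real.dist_eq, abs_lt]
  constructor <;> linarith
end

section
/- Let v be an increasing function on [0,∞) satisfying condition (V3). Then lim_{x→+∞} (v(x+1) − v(x))/x = 0. -/
open Filter

theorem stmt_1 (v : ℝ → ℝ) (hmono : MonotoneOn v (Set.Ici 0))
    (hV3 : ∀ ε : ℝ, 0 < ε → ∃ a : ℝ, 0 < a ∧ ∃ b : ℝ,
      ∀ y : ℝ, 1 ≤ y → ∀ x : ℝ, 1 ≤ x → v (x + y) - v x - ε * x ≤ v y + a * y + b) :
    Tendsto (fun x : ℝ => (v (x + 1) - v x) / x) atTop (nhds 0) := by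
  rw [Metric.tendsto_atTop]
  intro ε hε
  obtain ⟨a, ha, b, hab⟩ := hV3 (ε/2) (by linarith)
  set C := v 1 + a * 1 + b with hC
  refine ⟨max 1 (2 * |C| / ε + 1), fun x hx => ?_⟩
  have hx1 : 1 ≤ x := le_trans (le_max_left _ _) hx
  have hx2 : 2 * |C| / ε + 1 ≤ x := le_trans (le_max_right _ _) hx
  have hxpos : (0:ℝ) < x := by linarith
  have hub : v (x + 1) - v x ≤ ε/2 * x + C := by
    have := hab 1 le_rfl x hx1
    linarith
  have hlb : 0 ≤ v (x + 1) - v x := by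
    have := hmono (show x ∈ Set.Ici (0:ℝ) by simp; linarith)
      (show x + 1 ∈ Set.Ici (0:ℝ) by simp; linarith) (by linarith : x ≤ x + 1)
    linarith
  rw [Real.dist_eq, sub_zero, abs_of_nonneg (div_nonneg hlb hxpos.le), div_lt_iff₀ hxpos]
  have h1 : C ≤ |C| := le_abs_self C
  have h2 : 2 * |C| / ε < x := by linarith
  rw [div_lt_iff₀ hε] at h2
  nlinarith
end

section
/- Let u : [0,∞) → [0,∞) be a convex, increasing, twice continuously differentiable function such that lim_{x→+∞} (u(x+1) − u(x))/x = 0 and there is a constant C > 0 with u''(x) ≤ C/x for all x ≥ 1. Then for every ε ∈ (0, C) there exists a constant Q_ε such that for all y ≥ 1 and all x ≥ 1, u(x+y) − u(x) − ε·x < u(y) + (C·ln(2C/ε) + 5C/4)·y + Q_ε. -/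
/-!
Put `ψ x = u x - C x log x`. The bound `u'' ≤ C / x` makes `ψ` concave on `[1, ∞)`, and the
increments of a concave function decrease, so `u (x + y) - u (x + 1) - u y + u 1` is at most the
same expression for `x ↦ C x log x`. That expression is bounded by `ε / 2 · (x + y)` plus a
multiple of `y` using `log (1 + s) ≤ s` and the tangent line of `log` at `2C / ε`. The remaining
increment `u (x + 1) - u x` is `o(x)` by hypothesis, and bounded on compacts by continuity, so it
is at most `ε / 2 · x` up to a constant.
-/

open Filter Real Set Topology

theorem ConcaveOn.map_add_map_le_of_add_eq {s : Set ℝ} {f : ℝ → ℝ} (hf : ConcaveOn ℝ s f)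
    {a b c d : ℝ} (ha : a ∈ s) (hd : d ∈ s) (hab : a ≤ b) (hbd : b ≤ d) (habcd : a + d = b + c) :
    f a + f d ≤ f b + f c := by
  rcases hab.eq_or_lt with rfl | hab'
  · obtain rfl : c = d := by linarith
    exact le_rfl
  have hL : 0 < d - a := by linarith
  -- `b` and `c` are the convex combinations of `a`, `d` with weights `(l, 1 - l)`, `(1 - l, l)`.
  set l := (d - b) / (d - a) with hl
  have hl0 : 0 ≤ l := div_nonneg (by linarith) hL.le
  have hl1 : 0 ≤ 1 - l := by rw [sub_nonneg, div_le_one hL]; linarith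
  have hb : l • a + (1 - l) • d = b := by simp only [smul_eq_mul, hl]; field_simp; ring
  have hc : (1 - l) • a + l • d = c := by
    obtain rfl : c = a + d - b := by linarith
    simp only [smul_eq_mul, hl]; field_simp; ring
  have h₁ := hf.2 ha hd hl0 hl1 (by ring)
  have h₂ := hf.2 ha hd hl1 hl0 (by ring)
  rw [hb] at h₁
  rw [hc] at h₂
  simp only [smul_eq_mul] at h₁ h₂
  linarith

theorem concaveOn_sub_mul_mul_log {u : ℝ → ℝ} {a C : ℝ} (ha : 0 < a)
    (hu : ContDiffOn ℝ 2 u (Ici a)) (hu'' : ∀ x, a < x → deriv (deriv u) x ≤ C / x) :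
    ConcaveOn ℝ (Ici a) (fun x => u x - C * (x * log x)) := by
  have hu' : ContDiffOn ℝ 2 u (Ioi a) := hu.mono Ioi_subset_Ici_self
  have hv : ContDiffOn ℝ 1 (deriv u) (Ioi a) := hu'.deriv_of_isOpen isOpen_Ioi (by norm_num)
  have hmem {x : ℝ} (hx : x ∈ interior (Ici a)) : a < x := by rwa [interior_Ici] at hx
  refine concaveOn_of_hasDerivWithinAt2_nonpos (convex_Ici a)
    (f' := fun x => deriv u x - C * (log x + 1)) (f'' := fun x => deriv (deriv u) x - C / x)
    ?_ (fun x hx => ?_) (fun x hx => ?_) (fun x hx => sub_nonpos.2 (hu'' x (hmem hx)))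
  · refine hu.continuousOn.sub (continuousOn_const.mul ?_)
    exact continuousOn_id.mul (continuousOn_log.mono fun x hx => (ha.trans_le hx).ne')
  · have hdu := ((hu'.contDiffAt (Ioi_mem_nhds (hmem hx))).differentiableAt
      (by norm_num)).hasDerivAt
    exact (hdu.sub ((hasDerivAt_mul_log (ha.trans (hmem hx)).ne').const_mul C)).hasDerivWithinAt
  · have hdv := ((hv.contDiffAt (Ioi_mem_nhds (hmem hx))).differentiableAt
      (by norm_num)).hasDerivAt
    have hlog := ((hasDerivAt_log (ha.trans (hmem hx)).ne').add_const 1).const_mul C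
    rw [← div_eq_mul_inv] at hlog
    exact (hdv.sub hlog).hasDerivWithinAt

theorem mul_log_add_le {x y : ℝ} (hx : 0 < x) (hy : 0 ≤ y) :
    x * log (x + y) ≤ x * log x + y := by
  have h := log_le_sub_one_of_pos (show 0 < (x + y) / x by positivity)
  rw [log_div (by positivity) hx.ne'] at h
  have h' := mul_le_mul_of_nonneg_left h hx.le
  rw [mul_sub, mul_sub, mul_div_cancel₀ _ hx.ne'] at h'
  linarith

theorem log_le_div_add_log_sub_one {z t : ℝ} (hz : 0 < z) (ht : 0 < t) :
    log z ≤ z / t + log t - 1 := by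
  have h := log_le_sub_one_of_pos (div_pos hz ht)
  rw [log_div hz.ne' ht.ne'] at h
  linarith

theorem mul_log_add_sub_le {x y t : ℝ} (hx : 0 < x) (hy : 0 < y) (ht : 0 < t) :
    (x + y) * log (x + y) - (x + 1) * log (x + 1) - y * log y ≤ (x + y) / t + y * log t := by
  have hxlog : x * log x ≤ (x + 1) * log (x + 1) := by
    have hlog : log x ≤ log (x + 1) := log_le_log hx (by linarith)
    have hlog0 : 0 ≤ log (x + 1) := log_nonneg (by linarith)
    nlinarith
  have hylog : y * log ((x + y) / y) ≤ y * ((x + y) / y / t + log t - 1) :=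
    mul_le_mul_of_nonneg_left (log_le_div_add_log_sub_one (by positivity) ht) hy.le
  have hlin : y * ((x + y) / y / t + log t - 1) = (x + y) / t + y * log t - y := by
    field_simp
  rw [log_div (by positivity) hy.ne', hlin] at hylog
  linarith [mul_log_add_le hx hy.le]

theorem exists_forall_le_mul_add_of_tendsto_div {g : ℝ → ℝ} {a δ : ℝ}
    (hg : ContinuousOn g (Ici a)) (hlim : Tendsto (fun x => g x / x) atTop (𝓝 0)) (hδ : 0 < δ) :
    ∃ M, ∀ x, a ≤ x → g x ≤ δ * x + M := by
  obtain ⟨X, hX⟩ := eventually_atTop.mp (hlim.eventually (gt_mem_nhds hδ))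
  have hgδ : ContinuousOn (fun x => g x - δ * x) (Icc a (max X 1)) :=
    (hg.sub (continuous_const_mul δ).continuousOn).mono Icc_subset_Ici_self
  obtain ⟨B, hB⟩ := isCompact_Icc.bddAbove_image hgδ
  refine ⟨max B 0, fun x hx => ?_⟩
  rcases le_or_gt x (max X 1) with hxX | hxX
  · have : g x - δ * x ≤ B := hB (mem_image_of_mem _ ⟨hx, hxX⟩)
    linarith [le_max_left B 0]
  · have hx0 : 0 < x := lt_of_lt_of_le one_pos ((le_max_right X 1).trans hxX.le)
    have := hX x ((le_max_left X 1).trans hxX.le)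
    rw [div_lt_iff₀ hx0] at this
    linarith [le_max_right B 0]

theorem stmt_2_general (u : ℝ → ℝ) (C : ℝ) (hC : 0 < C)
    (hsmooth : ContDiffOn ℝ 2 u (Set.Ici 0))
    (hlim : Tendsto (fun x : ℝ => (u (x + 1) - u x) / x) atTop (nhds 0))
    (hsecond : ∀ x : ℝ, 1 ≤ x → deriv (deriv u) x ≤ C / x) :
    ∀ ε : ℝ, ε ∈ Set.Ioo 0 C → ∃ Q : ℝ, ∀ y : ℝ, 1 ≤ y → ∀ x : ℝ, 1 ≤ x →
      u (x + y) - u x - ε * x < u y + (C * Real.log (2 * C / ε) + 5 * C / 4) * y + Q := by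
  rintro ε ⟨hε, hεC⟩
  have hcont : ContinuousOn (fun x => u (x + 1) - u x) (Ici 0) :=
    (hsmooth.continuousOn.comp (continuousOn_id.add continuousOn_const)
      fun x (hx : 0 ≤ x) => show 0 ≤ x + 1 by linarith).sub hsmooth.continuousOn
  obtain ⟨M, hM⟩ := exists_forall_le_mul_add_of_tendsto_div hcont hlim (half_pos hε)
  have hconc := concaveOn_sub_mul_mul_log one_pos (hsmooth.mono (Ici_subset_Ici.2 zero_le_one))
    fun x hx => hsecond x hx.le
  refine ⟨M - u 1 + 1, fun y hy x hx => ?_⟩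
  have hsplit := hconc.map_add_map_le_of_add_eq (b := y) (c := x + 1) (d := x + y)
    self_mem_Ici (show (1 : ℝ) ≤ x + y by linarith) hy (by linarith) (by ring)
  have hlog := mul_log_add_sub_le (x := x) (y := y) (by linarith) (by linarith)
    (div_pos (mul_pos two_pos hC) hε)
  have hscale : C * ((x + y) / (2 * C / ε)) = ε / 2 * (x + y) := by field_simp
  simp only [log_one, mul_zero, sub_zero] at hsplit
  nlinarith [mul_le_mul_of_nonneg_left hlog hC.le, hM x (by linarith),
    mul_le_mul_of_nonneg_right hεC.le (show 0 ≤ y by linarith)]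

theorem stmt_2 (u : ℝ → ℝ) (C : ℝ) (hC : 0 < C)
    (hnonneg : ∀ x ∈ Set.Ici (0 : ℝ), 0 ≤ u x)
    (hconv : ConvexOn ℝ (Set.Ici 0) u)
    (hmono : MonotoneOn u (Set.Ici 0))
    (hsmooth : ContDiffOn ℝ 2 u (Set.Ici 0))
    (hlim : Tendsto (fun x : ℝ => (u (x + 1) - u x) / x) atTop (nhds 0))
    (hsecond : ∀ x : ℝ, 1 ≤ x → deriv (deriv u) x ≤ C / x) :
    ∀ ε : ℝ, ε ∈ Set.Ioo 0 C → ∃ Q : ℝ, ∀ y : ℝ, 1 ≤ y → ∀ x : ℝ, 1 ≤ x →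
      u (x + y) - u x - ε * x < u y + (C * Real.log (2 * C / ε) + 5 * C / 4) * y + Q :=
  stmt_2_general u C hC hsmooth hlim hsecond
end

section
/- Let v : [0,∞) → [0,∞) be a convex, increasing, twice continuously differentiable function with v(0) = 0 satisfying conditions (V1) and (V2), such that lim_{x→+∞} (v(x+1) − v(x))/x = 0 and there exists C > 0 with v''(x) ≤ C/x for all x ≥ 1. Then the sequence (exp(v(n)))_{n≥0} belongs to the class 𝓜, i.e. it is increasing, has first term 1, and satisfies conditions (i1), (i2), (i3), (i4). -/
open Filter

/-- Condition (i1): logarithmic convexity. -/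
def CondI1 (L : ℕ → ℝ) : Prop := ∀ n : ℕ, (L (n + 1)) ^ 2 ≤ L n * L (n + 2)

/-- Condition (i2). -/
def CondI2 (L : ℕ → ℝ) : Prop :=
  ∃ H₁ : ℝ, 0 < H₁ ∧ ∃ H₂ : ℝ, 0 < H₂ ∧ ∀ n : ℕ, H₁ * H₂ ^ n * n.factorial ≤ L n

/-- Condition (i3). -/
def CondI3 (L : ℕ → ℝ) : Prop :=
  ∀ s : ℝ, 1 < s →
    1 < Filter.liminf (fun n : ℕ => (L ⌊s * (n : ℝ)⌋₊ / (L n) ^ s) ^ ((1 : ℝ) / n)) Filter.atTop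

/-- The class 𝓜 of increasing sequences of positive reals with first term 1
satisfying (i1)-(i4). -/
def ClassM (L : ℕ → ℝ) : Prop :=
  (∀ n, 0 < L n) ∧ Monotone L ∧ L 0 = 1 ∧ CondI1 L ∧ CondI2 L ∧ CondI3 L ∧ CondI4 L

/-!
Both growth conditions come from two monotonicity facts on `[1, ∞)`, each a consequence of
`v'' ≤ C / x`: `v' - C log` is antitone, and so is `x v' - v - C x`. Together with the convexity
estimate `v y - v x ≤ (y - x) v' y` they give `v (s x) - s v x = O(x)` and
`v (x + y) - v x - v y ≤ ε x + K_ε y` (through `C log t ≤ ε t + C (log (C / ε) - 1)`), the upper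
halves of (i3) and (i4). The lower half of (i3) is (V2), where passing from `s n` to `⌊s n⌋` costs
only `o(n)` because `v (x + 1) - v x = o(x)`. (i1) is midpoint convexity and (i2) is (V1) together
with `n! ≤ nⁿ`.
-/

open Set Real

theorem antitoneOn_Ici_of_hasDerivAt_nonpos {f f' : ℝ → ℝ} {a : ℝ}
    (hf : ∀ x, a ≤ x → HasDerivAt f (f' x) x) (hf' : ∀ x, a < x → f' x ≤ 0) :
    AntitoneOn f (Ici a) := by
  refine antitoneOn_of_hasDerivWithinAt_nonpos (f' := f') (convex_Ici a)
    (fun x hx => (hf x hx).continuousAt.continuousWithinAt) (fun x hx => ?_) (fun x hx => ?_)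
  · rw [interior_Ici] at hx
    exact (hf x (le_of_lt hx)).hasDerivWithinAt
  · rw [interior_Ici] at hx
    exact hf' x hx

theorem mul_log_le_mul_add {C ε t : ℝ} (hC : 0 < C) (hε : 0 < ε) (ht : 0 < t) :
    C * log t ≤ ε * t + C * (log (C / ε) - 1) := by
  have h := log_le_sub_one_of_pos (show 0 < ε * t / C by positivity)
  rw [log_div (by positivity) hC.ne', log_mul hε.ne' ht.ne'] at h
  have h' := mul_le_mul_of_nonneg_left h hC.le
  have hCt : C * (ε * t / C) = ε * t := by field_simp
  rw [log_div hC.ne' hε.ne']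
  linarith

theorem ConvexOn.sub_le_mul_deriv {S : Set ℝ} {f : ℝ → ℝ} {x y : ℝ} (hf : ConvexOn ℝ S f)
    (hx : x ∈ S) (hy : y ∈ S) (hxy : x < y) (hfy : DifferentiableAt ℝ f y) :
    f y - f x ≤ (y - x) * deriv f y := by
  have h := hf.slope_le_deriv hx hy hxy hfy
  rwa [slope_def_field, div_le_iff₀ (sub_pos.2 hxy), mul_comm] at h

-- In `ℝ`, the `liminf` of a sequence that is not eventually bounded above is a junk value.
theorem one_lt_liminf_exp {ι : Type*} {l : Filter ι} [l.NeBot] {a : ι → ℝ} {c K : ℝ}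
    (hc : 0 < c) (hlow : ∀ᶠ n in l, c ≤ a n) (hup : ∀ᶠ n in l, a n ≤ K) :
    1 < liminf (fun n => exp (a n)) l :=
  calc 1 < exp c := one_lt_exp_iff.2 hc
    _ ≤ liminf (fun n => exp (a n)) l :=
      le_liminf_of_le
        (isCoboundedUnder_ge_of_eventually_le l (hup.mono fun _ h => exp_le_exp.2 h))
        (hlow.mono fun _ h => exp_le_exp.2 h)

section

variable {v : ℝ → ℝ} {C : ℝ}

theorem deriv_le_deriv_add_mul_log (hd2 : ∀ x, 1 ≤ x → DifferentiableAt ℝ (deriv v) x)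
    (hv'' : ∀ x, 1 ≤ x → deriv (deriv v) x ≤ C / x) {x y : ℝ} (hx : 1 ≤ x) (hxy : x ≤ y) :
    deriv v y ≤ deriv v x + C * log (y / x) := by
  have hanti : AntitoneOn (fun x => deriv v x - C * log x) (Ici 1) := by
    refine antitoneOn_Ici_of_hasDerivAt_nonpos
      (fun x hx => (hd2 x hx).hasDerivAt.sub
        ((hasDerivAt_log (by linarith : (0 : ℝ) < x).ne').const_mul C))
      (fun x hx => ?_)
    have := hv'' x hx.le
    rw [div_eq_mul_inv] at this
    linarith
  have := hanti hx (le_trans hx hxy : (1 : ℝ) ≤ y) hxy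
  rw [log_div (by linarith) (by linarith)]
  simp only at this
  linarith

theorem exists_mul_deriv_sub_le (hd : ∀ x, 1 ≤ x → DifferentiableAt ℝ v x)
    (hd2 : ∀ x, 1 ≤ x → DifferentiableAt ℝ (deriv v) x)
    (hv'' : ∀ x, 1 ≤ x → deriv (deriv v) x ≤ C / x) :
    ∃ a, ∀ x, 1 ≤ x → x * deriv v x - v x ≤ a * x := by
  have hanti : AntitoneOn (fun x => x * deriv v x - v x - C * x) (Ici 1) := by
    refine antitoneOn_Ici_of_hasDerivAt_nonpos
      (fun x hx => (((hasDerivAt_id x).mul (hd2 x hx).hasDerivAt).sub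
        (hd x hx).hasDerivAt).sub ((hasDerivAt_id x).const_mul C)) (fun x hx => ?_)
    have := mul_le_mul_of_nonneg_left (hv'' x hx.le) (by positivity : (0 : ℝ) ≤ x)
    rw [mul_div_cancel₀ _ (by positivity)] at this
    simp only [id, one_mul, mul_one]
    linarith
  refine ⟨C + |deriv v 1 - v 1 - C|, fun x hx => ?_⟩
  have h := hanti self_mem_Ici hx hx
  have : deriv v 1 - v 1 - C ≤ |deriv v 1 - v 1 - C| * x :=
    (le_abs_self _).trans (le_mul_of_one_le_right (abs_nonneg _) hx)
  simp only [one_mul, mul_one] at h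
  linarith

theorem exists_sub_mul_le (hconv : ConvexOn ℝ (Ici 1) v)
    (hd : ∀ x, 1 ≤ x → DifferentiableAt ℝ v x)
    (hd2 : ∀ x, 1 ≤ x → DifferentiableAt ℝ (deriv v) x)
    (hv'' : ∀ x, 1 ≤ x → deriv (deriv v) x ≤ C / x) {s : ℝ} (hs : 1 < s) :
    ∃ K, ∀ x, 1 ≤ x → v (s * x) - s * v x ≤ K * x := by
  obtain ⟨a, ha⟩ := exists_mul_deriv_sub_le hd hd2 hv''
  refine ⟨(s - 1) * (a + C * log s), fun x hx => ?_⟩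
  have hsx : x < s * x := by nlinarith
  have hincr := hconv.sub_le_mul_deriv hx (hx.trans hsx.le) hsx (hd _ (hx.trans hsx.le))
  have hderiv := deriv_le_deriv_add_mul_log hd2 hv'' hx hsx.le
  rw [mul_div_cancel_right₀ _ (by linarith : x ≠ 0)] at hderiv
  have h1 := mul_le_mul_of_nonneg_left hderiv (by nlinarith : 0 ≤ (s * x - x))
  have h2 := mul_le_mul_of_nonneg_left (ha x hx) (by linarith : 0 ≤ s - 1)
  linarith

theorem exists_add_sub_sub_le (hC : 0 < C) (hconv : ConvexOn ℝ (Ici 0) v)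
    (hd : ∀ x, 1 ≤ x → DifferentiableAt ℝ v x)
    (hd2 : ∀ x, 1 ≤ x → DifferentiableAt ℝ (deriv v) x)
    (hv'' : ∀ x, 1 ≤ x → deriv (deriv v) x ≤ C / x) {ε : ℝ} (hε : 0 < ε) :
    ∃ K, ∀ x, 0 ≤ x → ∀ y, 1 ≤ y → v (x + y) - v x - v y ≤ ε * x + K * y := by
  obtain ⟨a, ha⟩ := exists_mul_deriv_sub_le hd hd2 hv''
  refine ⟨a + ε + C * (log (C / ε) - 1), fun x hx y hy => ?_⟩
  have hxy : x < x + y := by linarith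
  have hincr := hconv.sub_le_mul_deriv hx (by simp only [mem_Ici]; linarith) hxy
    (hd _ (by linarith))
  have hderiv := deriv_le_deriv_add_mul_log hd2 hv'' hy (by linarith : y ≤ x + y)
  have hlog := mul_log_le_mul_add hC hε (by positivity : 0 < (x + y) / y)
  have h1 := mul_le_mul_of_nonneg_left (hderiv.trans (add_le_add_right hlog _))
    (by linarith : 0 ≤ y)
  have hy' : y * (ε * ((x + y) / y)) = ε * (x + y) := by field_simp
  rw [add_sub_cancel_left] at hincr
  linarith [ha y hy]

theorem condI1_exp_of_convexOn (hconv : ConvexOn ℝ (Ici 0) v) :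
    CondI1 (fun n : ℕ => exp (v n)) := by
  intro n
  have h := hconv.2 (mem_Ici.2 (Nat.cast_nonneg n)) (mem_Ici.2 (Nat.cast_nonneg (n + 2)))
    (by norm_num : (0 : ℝ) ≤ 1 / 2) (by norm_num : (0 : ℝ) ≤ 1 / 2) (by norm_num)
  have hmid : (1 / 2 : ℝ) • (n : ℝ) + (1 / 2 : ℝ) • ((n + 2 : ℕ) : ℝ) = (n + 1 : ℕ) := by
    push_cast; rw [smul_eq_mul, smul_eq_mul]; ring
  rw [hmid, smul_eq_mul, smul_eq_mul] at h
  rw [sq, ← exp_add, ← exp_add, exp_le_exp]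
  linarith

theorem condI2_exp_of_mul_log_le {A B : ℝ}
    (hV1 : ∀ x : ℝ, 1 ≤ x → x * log x + A * x + B ≤ v x) :
    CondI2 (fun n : ℕ => exp (v n)) := by
  refine ⟨min (exp B) (exp (v 0)), by positivity, exp A, exp_pos A, fun n => ?_⟩
  rcases Nat.eq_zero_or_pos n with rfl | hn
  · simp
  have hn1 : (1 : ℝ) ≤ n := by exact_mod_cast hn
  calc min (exp B) (exp (v 0)) * exp A ^ n * (n.factorial : ℝ)
      ≤ exp B * exp A ^ n * (n : ℝ) ^ n := by
        gcongr
        · exact min_le_left _ _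
        · exact_mod_cast Nat.factorial_le_pow n
    _ = exp (n * log n + A * n + B) := by
        rw [exp_add, exp_add, exp_nat_mul, exp_log (by linarith), mul_comm A, exp_nat_mul]
        ring
    _ ≤ exp (v n) := exp_le_exp.2 (hV1 n hn1)

theorem eventually_le_floor_add (hmono : MonotoneOn v (Ici 0))
    (hlim : Tendsto (fun x => (v (x + 1) - v x) / x) atTop (nhds 0)) {δ : ℝ} (hδ : 0 < δ) :
    ∀ᶠ x in atTop, v x ≤ v ⌊x⌋₊ + δ * x := by
  have hfloor : Tendsto (fun x : ℝ => (⌊x⌋₊ : ℝ)) atTop atTop :=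
    tendsto_natCast_atTop_atTop.comp tendsto_nat_floor_atTop
  filter_upwards [hfloor.eventually
      ((hlim.eventually (gt_mem_nhds hδ)).and (eventually_gt_atTop 0)),
    eventually_ge_atTop 0] with x ⟨hslope, hpos⟩ hx
  have hstep : v x ≤ v (⌊x⌋₊ + 1) :=
    hmono hx (mem_Ici.2 (by positivity)) (Nat.lt_floor_add_one x).le
  have hgap := (div_lt_iff₀ hpos).1 hslope
  have hδx := mul_le_mul_of_nonneg_left (Nat.floor_le hx) hδ.le
  linarith

theorem condI3_exp_of_monotoneOn (hmono : MonotoneOn v (Ici 0))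
    (hlim : Tendsto (fun x => (v (x + 1) - v x) / x) atTop (nhds 0))
    (hV2 : ∀ s : ℝ, 1 < s → ∃ η : ℝ, 0 < η ∧ ∃ m : ℝ,
      ∀ x : ℝ, 0 ≤ x → s * v x + η * x + m ≤ v (s * x))
    (hup : ∀ s : ℝ, 1 < s → ∃ K, ∀ x, 1 ≤ x → v (s * x) - s * v x ≤ K * x) :
    CondI3 (fun n : ℕ => exp (v n)) := by
  intro s hs
  obtain ⟨η, hη, m, hm⟩ := hV2 s hs
  obtain ⟨K, hK⟩ := hup s hs
  have hrw : ∀ n : ℕ, (exp (v ⌊s * n⌋₊) / exp (v n) ^ s) ^ (1 / (n : ℝ))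
      = exp ((v ⌊s * n⌋₊ - s * v n) / n) := fun n => by
    rw [← exp_mul, ← exp_sub, ← exp_mul]
    ring_nf
  simp only [hrw]
  have hsn : Tendsto (fun n : ℕ => s * (n : ℝ)) atTop atTop :=
    tendsto_natCast_atTop_atTop.const_mul_atTop (by linarith)
  refine one_lt_liminf_exp (c := η / 4) (K := K) (by positivity) ?_ ?_
  · filter_upwards [hsn.eventually (eventually_le_floor_add hmono hlim (δ := η / (2 * s))
        (by positivity)), (tendsto_const_div_atTop_nhds_zero_nat m).eventually
        (lt_mem_nhds (by linarith : -(η / 4) < 0)), eventually_ge_atTop 1] with n hfl hmn hn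
    have hn0 : (0 : ℝ) < n := by exact_mod_cast hn
    have hδ : η / (2 * s) * (s * n) = η * n / 2 := by field_simp
    have hmn' := (lt_div_iff₀ hn0).1 hmn
    rw [le_div_iff₀ hn0]
    linarith [hm n hn0.le]
  · filter_upwards [eventually_ge_atTop 1] with n hn
    have hn1 : (1 : ℝ) ≤ n := by exact_mod_cast hn
    have hfl : v ⌊s * n⌋₊ ≤ v (s * n) :=
      hmono (mem_Ici.2 (Nat.cast_nonneg _)) (mem_Ici.2 (by positivity))
        (Nat.floor_le (by positivity))
    rw [div_le_iff₀ (by positivity)]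
    linarith [hK n hn1]

theorem condI4_exp_of_add_sub_sub_le (hv0 : v 0 = 0)
    (h : ∀ ε, 0 < ε → ∃ K, ∀ x, 0 ≤ x → ∀ y, 1 ≤ y → v (x + y) - v x - v y ≤ ε * x + K * y) :
    CondI4 (fun n : ℕ => exp (v n)) := by
  intro δ hδ
  obtain ⟨K, hK⟩ := h (log (1 + δ)) (log_pos (by linarith))
  refine ⟨1, one_pos, exp (max K 1), one_lt_exp_iff.2 (by positivity), fun n m => ?_⟩
  have hkey : v (m + n) - v m - v n ≤ log (1 + δ) * m + max K 1 * n := by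
    rcases Nat.eq_zero_or_pos n with rfl | hn
    · simp only [Nat.cast_zero, add_zero, mul_zero, hv0, sub_self]
      exact mul_nonneg (log_nonneg (by linarith)) (Nat.cast_nonneg m)
    · have hKn := mul_le_mul_of_nonneg_right (le_max_left K 1) (Nat.cast_nonneg (α := ℝ) n)
      linarith [hK m (Nat.cast_nonneg m) n (by exact_mod_cast hn)]
  have hδm : (1 + δ) ^ m = exp (m * log (1 + δ)) := by
    rw [exp_nat_mul, exp_log (by linarith)]
  rw [div_le_iff₀ (by positivity), hδm, ← exp_nat_mul, one_mul, ← exp_add, ← exp_add,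
    ← exp_add, exp_le_exp]
  push_cast
  linarith

end

theorem stmt_3_general (v : ℝ → ℝ) (C : ℝ) (hC : 0 < C)
    (hconv : ConvexOn ℝ (Set.Ici 0) v)
    (hmono : MonotoneOn v (Set.Ici 0))
    (hsmooth : ContDiffOn ℝ 2 v (Set.Ici 0))
    (hv0 : v 0 = 0)
    (hV1 : ∃ A B : ℝ, ∀ x : ℝ, 1 ≤ x → x * Real.log x + A * x + B ≤ v x)
    (hV2 : ∀ s : ℝ, 1 < s → ∃ η : ℝ, 0 < η ∧ ∃ m : ℝ,
      ∀ x : ℝ, 0 ≤ x → s * v x + η * x + m ≤ v (s * x))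
    (hlim : Tendsto (fun x : ℝ => (v (x + 1) - v x) / x) atTop (nhds 0))
    (hsecond : ∀ x : ℝ, 1 ≤ x → deriv (deriv v) x ≤ C / x) :
    ClassM (fun n : ℕ => Real.exp (v n)) := by
  have hd : ∀ x, 1 ≤ x → DifferentiableAt ℝ v x := fun x hx =>
    (hsmooth.contDiffAt (Ici_mem_nhds (by linarith))).differentiableAt (by norm_num)
  have hd2 : ∀ x, 1 ≤ x → DifferentiableAt ℝ (deriv v) x := fun x hx =>
    (((hsmooth.mono Ioi_subset_Ici_self).deriv_of_isOpen isOpen_Ioi (m := 1)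
      (by norm_num)).contDiffAt (Ioi_mem_nhds (by linarith))).differentiableAt (by norm_num)
  obtain ⟨A, B, hV1⟩ := hV1
  refine ⟨fun n => exp_pos _, fun m n hmn => ?_, by simp [hv0], condI1_exp_of_convexOn hconv,
    condI2_exp_of_mul_log_le hV1, ?_, ?_⟩
  · exact exp_le_exp.2 (hmono (mem_Ici.2 (Nat.cast_nonneg m)) (mem_Ici.2 (Nat.cast_nonneg n))
      (Nat.cast_le.2 hmn))
  · exact condI3_exp_of_monotoneOn hmono hlim hV2 fun s hs =>
      exists_sub_mul_le (hconv.subset (Ici_subset_Ici.2 zero_le_one) (convex_Ici 1)) hd hd2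
        hsecond hs
  · exact condI4_exp_of_add_sub_sub_le hv0 fun ε hε =>
      exists_add_sub_sub_le hC hconv hd hd2 hsecond hε

theorem stmt_3 (v : ℝ → ℝ) (C : ℝ) (hC : 0 < C)
    (hnonneg : ∀ x ∈ Set.Ici (0 : ℝ), 0 ≤ v x)
    (hconv : ConvexOn ℝ (Set.Ici 0) v)
    (hmono : MonotoneOn v (Set.Ici 0))
    (hsmooth : ContDiffOn ℝ 2 v (Set.Ici 0))
    (hv0 : v 0 = 0)
    (hV1 : ∃ A B : ℝ, ∀ x : ℝ, 1 ≤ x → x * Real.log x + A * x + B ≤ v x)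
    (hV2 : ∀ s : ℝ, 1 < s → ∃ η : ℝ, 0 < η ∧ ∃ m : ℝ,
      ∀ x : ℝ, 0 ≤ x → s * v x + η * x + m ≤ v (s * x))
    (hlim : Tendsto (fun x : ℝ => (v (x + 1) - v x) / x) atTop (nhds 0))
    (hsecond : ∀ x : ℝ, 1 ≤ x → deriv (deriv v) x ≤ C / x) :
    ClassM (fun n : ℕ => Real.exp (v n)) :=
  stmt_3_general v C hC hconv hmono hsmooth hv0 hV1 hV2 hlim hsecond
end

section
/- Let v be an increasing function on [0,∞) with v(0) = 0 satisfying condition (V3). Then the sequence L_n = exp(v(n)), n ≥ 0, satisfies condition (i4): for every δ > 0 there exist p_δ > 0 and t_δ > 1 such that sup_{m∈ℕ} L_{m+n}/(L_m·(1+δ)^m) ≤ p_δ·t_δ^n·L_n for all n ≥ 0. -/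
open Filter

theorem stmt_4 (v : ℝ → ℝ) (hmono : MonotoneOn v (Set.Ici 0)) (hv0 : v 0 = 0)
    (hV3 : ∀ ε : ℝ, 0 < ε → ∃ a : ℝ, 0 < a ∧ ∃ b : ℝ,
      ∀ y : ℝ, 1 ≤ y → ∀ x : ℝ, 1 ≤ x → v (x + y) - v x - ε * x ≤ v y + a * y + b) :
    CondI4 (fun n : ℕ => Real.exp (v n)) := by
  intro δ hδ
  have hδ1 : (0:ℝ) < 1 + δ := by linarith
  obtain ⟨a, ha, b, hab⟩ := hV3 (Real.log (1 + δ)) (Real.log_pos (by linarith))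
  refine ⟨max 1 (Real.exp b), lt_of_lt_of_le one_pos (le_max_left _ _),
    Real.exp a, by simpa using Real.exp_lt_exp.mpr ha, ?_⟩
  intro n m
  simp only
  have hpow : (0:ℝ) < (1 + δ) ^ m := pow_pos hδ1 m
  have hden : (0:ℝ) < Real.exp (v m) * (1 + δ) ^ m := mul_pos (Real.exp_pos _) hpow
  have hp1 : (1:ℝ) ≤ max 1 (Real.exp b) := le_max_left _ _
  have ht1 : (1:ℝ) ≤ Real.exp a ^ n := one_le_pow₀ (by
    simpa using Real.exp_le_exp.mpr ha.le)
  rcases Nat.eq_zero_or_pos n with hn | hn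
  · subst hn
    simp only [Nat.add_zero, Nat.cast_zero, hv0, Real.exp_zero, pow_zero, mul_one]
    rw [div_le_iff₀ hden]
    calc Real.exp (v m) = 1 * Real.exp (v m) := by ring
      _ ≤ max 1 (Real.exp b) * (Real.exp (v m) * (1 + δ) ^ m) := by
          rw [one_mul]
          nlinarith [Real.exp_pos (v m), one_le_pow₀ (by linarith : (1:ℝ) ≤ 1 + δ) (n := m)]
  rcases Nat.eq_zero_or_pos m with hm | hm
  · subst hm
    simp only [Nat.zero_add, Nat.cast_zero, hv0, Real.exp_zero, pow_zero, mul_one, one_mul]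
    rw [div_one]
    nlinarith [Real.exp_pos (v (n:ℝ)),
      mul_le_mul hp1 ht1 zero_le_one (by linarith : (0:ℝ) ≤ 1 ⊔ Real.exp b)]
  · -- both ≥ 1
    have hn1 : (1:ℝ) ≤ (n:ℝ) := by exact_mod_cast hn
    have hm1 : (1:ℝ) ≤ (m:ℝ) := by exact_mod_cast hm
    have key := hab (n:ℝ) hn1 (m:ℝ) hm1
    have hcast : ((m + n : ℕ) : ℝ) = (m:ℝ) + (n:ℝ) := by push_cast; ring
    rw [div_le_iff₀ hden, hcast]
    have hexp : (1 + δ) ^ m = Real.exp (Real.log (1 + δ) * m) := by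
      rw [mul_comm, Real.exp_nat_mul, Real.exp_log hδ1]
    calc Real.exp (v ((m:ℝ) + n))
        ≤ Real.exp (v n + a * n + b + (v m + Real.log (1 + δ) * m)) := by
          apply Real.exp_le_exp.mpr; linarith
      _ = Real.exp b * Real.exp a ^ n * Real.exp (v n) *
            (Real.exp (v m) * (1 + δ) ^ m) := by
          rw [hexp, ← Real.exp_nat_mul, ← Real.exp_add, ← Real.exp_add, ← Real.exp_add,
            ← Real.exp_add]
          ring_nf
      _ ≤ max 1 (Real.exp b) * Real.exp a ^ n * Real.exp (v n) *
            (Real.exp (v m) * (1 + δ) ^ m) := by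
          have h : Real.exp b ≤ max 1 (Real.exp b) := le_max_right _ _
          gcongr
end

section
/- Let ρ ≥ 1 and define w*(r) = sup_{k∈ℤ, k≥0} ln(r^k/(k+1)^{ρk}) for r > 0. Then for all r > e^ρ one has ρ·e^{−1}·r^{1/ρ} − 2·ln r ≤ w*(r) ≤ ρ·e^{−1}·r^{1/ρ}. -/
open Filter

theorem stmt_7 (ρ : ℝ) (hρ : 1 ≤ ρ) (r : ℝ) (hr : Real.exp ρ < r) :
    ρ * Real.exp (-1) * r ^ (1 / ρ) - 2 * Real.log r ≤
      (⨆ k : ℕ, Real.log (r ^ k / ((k : ℝ) + 1) ^ (ρ * k))) ∧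
    (⨆ k : ℕ, Real.log (r ^ k / ((k : ℝ) + 1) ^ (ρ * k))) ≤
      ρ * Real.exp (-1) * r ^ (1 / ρ) := by
  have hρ0 : (0:ℝ) < ρ := lt_of_lt_of_le one_pos hρ
  have hr0 : (0:ℝ) < r := (Real.exp_pos ρ).trans hr
  have hρlog : ρ < Real.log r := (Real.lt_log_iff_exp_lt hr0).mpr hr
  set s : ℝ := r ^ (1 / ρ) with hs
  have hs0 : 0 < s := Real.rpow_pos_of_pos hr0 _
  have hlogr : Real.log r = ρ * Real.log s := by
    rw [hs, Real.log_rpow hr0]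
    field_simp
  have hse : Real.exp 1 < s := by
    have : s = Real.exp (Real.log r * (1/ρ)) := by
      rw [hs, Real.rpow_def_of_pos hr0]
    rw [this]
    apply Real.exp_lt_exp.mpr
    have h := mul_lt_mul_of_pos_right hρlog (inv_pos.mpr hρ0)
    rw [mul_inv_cancel₀ hρ0.ne'] at h
    rw [one_div]
    nlinarith
  -- rewrite the terms
  have hL : ∀ k : ℕ, Real.log (r ^ k / ((k:ℝ) + 1) ^ (ρ * k))
      = ρ * k * (Real.log s - Real.log ((k:ℝ) + 1)) := by
    intro k
    have hk1 : (0:ℝ) < (k:ℝ) + 1 := by positivity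
    rw [Real.log_div (by positivity) (by positivity), Real.log_pow,
      Real.log_rpow hk1, hlogr]
    ring
  -- key upper estimate
  have key : ∀ t : ℝ, 0 < t → t * (Real.log s - Real.log t) ≤ s * Real.exp (-1) := by
    intro t ht
    have h := Real.log_le_sub_one_of_pos (show (0:ℝ) < s / (Real.exp 1 * t) by positivity)
    rw [Real.log_div hs0.ne' (by positivity),
      Real.log_mul (Real.exp_pos 1).ne' ht.ne', Real.log_exp] at h
    have h2 : Real.log s - Real.log t ≤ s / (Real.exp 1 * t) := by linarith
    have h3 : t * (Real.log s - Real.log t) ≤ t * (s / (Real.exp 1 * t)) :=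
      mul_le_mul_of_nonneg_left h2 ht.le
    have h4 : t * (s / (Real.exp 1 * t)) = s * Real.exp (-1) := by
      rw [Real.exp_neg]
      field_simp
    linarith
  set B : ℝ := ρ * Real.exp (-1) * s with hB
  have hub : ∀ k : ℕ, Real.log (r ^ k / ((k:ℝ) + 1) ^ (ρ * k)) ≤ B := by
    intro k
    rw [hL k]
    cases k with
    | zero => simp [hB]; positivity
    | succ n =>
      push_cast
      have ht : (0:ℝ) < ((n:ℝ) + 1) := by positivity
      have hlog : Real.log ((n:ℝ) + 1) ≤ Real.log ((n:ℝ) + 1 + 1) :=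
        Real.log_le_log ht (by linarith)
      have h1 : ((n:ℝ)+1) * (Real.log s - Real.log ((n:ℝ)+1+1))
          ≤ ((n:ℝ)+1) * (Real.log s - Real.log ((n:ℝ)+1)) :=
        mul_le_mul_of_nonneg_left (by linarith) ht.le
      have h2 := key ((n:ℝ)+1) ht
      have h3 : ((n:ℝ)+1) * (Real.log s - Real.log ((n:ℝ)+1+1)) ≤ s * Real.exp (-1) :=
        le_trans h1 h2
      calc ρ * ((n:ℝ)+1) * (Real.log s - Real.log ((n:ℝ)+1+1))
          = ρ * (((n:ℝ)+1) * (Real.log s - Real.log ((n:ℝ)+1+1))) := by ring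
        _ ≤ ρ * (s * Real.exp (-1)) := mul_le_mul_of_nonneg_left h3 hρ0.le
        _ = B := by rw [hB]; ring
  have hbdd : BddAbove (Set.range fun k : ℕ => Real.log (r ^ k / ((k:ℝ) + 1) ^ (ρ * k))) := by
    refine ⟨B, ?_⟩
    rintro x ⟨k, rfl⟩
    exact hub k
  constructor
  · -- lower bound
    set t0 : ℝ := s * Real.exp (-1) with ht0def
    have ht0pos : 0 < t0 := by positivity
    have ht01 : 1 < t0 := by
      have : Real.exp 1 * Real.exp (-1) < s * Real.exp (-1) :=
        mul_lt_mul_of_pos_right hse (Real.exp_pos _)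
      rwa [← Real.exp_add, add_neg_cancel, Real.exp_zero] at this
    set k : ℕ := ⌊t0⌋₊ with hkdef
    have hkle : (k:ℝ) ≤ t0 := Nat.floor_le ht0pos.le
    have hkge : t0 - 1 < (k:ℝ) := Nat.sub_one_lt_floor t0
    have hkpos : (0:ℝ) < (k:ℝ) := by linarith
    have hlogt0 : Real.log t0 = Real.log s - 1 := by
      rw [ht0def, Real.log_mul hs0.ne' (Real.exp_pos _).ne', Real.log_exp]
      ring
    have hlogk : Real.log ((k:ℝ) + 1) ≤ Real.log s - 1 + 1 / t0 := by
      have h1 : Real.log ((k:ℝ) + 1) ≤ Real.log (t0 + 1) :=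
        Real.log_le_log (by positivity) (by linarith)
      have h2 := Real.log_le_sub_one_of_pos (show (0:ℝ) < (t0 + 1) / t0 by positivity)
      rw [Real.log_div (by positivity) ht0pos.ne'] at h2
      have h3 : (t0 + 1) / t0 = 1 + 1 / t0 := by field_simp
      rw [h3] at h2
      rw [hlogt0] at h2
      linarith
    have hX : 1 - 1 / t0 ≤ Real.log s - Real.log ((k:ℝ) + 1) := by linarith
    have hXpos : (0:ℝ) ≤ 1 - 1 / t0 := by
      have : 1 / t0 < 1 := by
        rw [div_lt_one ht0pos]; exact ht01
      linarith
    have hmul : (t0 - 1) * (1 - 1 / t0) ≤ (k:ℝ) * (Real.log s - Real.log ((k:ℝ) + 1)) :=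
      mul_le_mul hkge.le hX hXpos hkpos.le
    have hid : (t0 - 1) * (1 - 1 / t0) = t0 - 2 + 1 / t0 := by
      field_simp
      ring
    have h1t0 : 0 < 1 / t0 := by positivity
    have hlow : t0 - 2 ≤ (k:ℝ) * (Real.log s - Real.log ((k:ℝ) + 1)) := by
      rw [hid] at hmul; linarith
    have hLk : ρ * (t0 - 2) ≤ Real.log (r ^ k / ((k:ℝ) + 1) ^ (ρ * k)) := by
      rw [hL k]
      calc ρ * (t0 - 2) ≤ ρ * ((k:ℝ) * (Real.log s - Real.log ((k:ℝ) + 1))) :=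
            mul_le_mul_of_nonneg_left hlow hρ0.le
        _ = ρ * (k:ℝ) * (Real.log s - Real.log ((k:ℝ) + 1)) := by ring
    have hfinal : ρ * Real.exp (-1) * r ^ (1/ρ) - 2 * Real.log r
        ≤ Real.log (r ^ k / ((k:ℝ) + 1) ^ (ρ * k)) := by
      have hρt0 : ρ * Real.exp (-1) * r ^ (1/ρ) = ρ * t0 := by
        rw [ht0def, ← hs]; ring
      have : ρ * (t0 - 2) = ρ * t0 - 2 * ρ := by ring
      nlinarith [hρlog]
    exact le_trans hfinal (le_ciSup hbdd k)
  · exact ciSup_le hub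
end

section
/- For every ρ ≥ 1, the sequence (Γ(n+2)^ρ)_{n≥0} = (((n+1)!)^ρ)_{n≥0} belongs to the class 𝓜, i.e. it is increasing, has first term 1, and satisfies conditions (i1), (i2), (i3), (i4). -/
/-!
Write `F n = (n + 1)!`, so that `Γ(n + 2)^ρ = F n ^ ρ`. Each condition passes from `F` to `F ^ ρ`:
(i1) and (i2) are multiplicative, and (i4) for `F ^ ρ` at `δ` is (i4) for `F` at `δ'` with
`(1 + δ')^ρ = 1 + δ`. For `F` itself, (i4) comes from the single binomial term
`C(m+n+1, n) δ^n ≤ (1 + δ)^(m+n+1)` and `(m+n+1)! = C(m+n+1, n) (m+1)! n!`. For (i3) one shows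
that `log F ⌊s n⌋ - s log F n` lies between `c n` and `C n` with `c > 0`, a property that scales by
`ρ`; for `F` it follows from Stirling's bounds `m log m - m ≤ log m! ≤ m log m - m + O(log m)`,
which give `c` close to `s log s`.
-/

open Filter

open Real
open scoped Nat

section Rpow

variable {L : ℕ → ℝ}

lemma CondI1.rpow (hL : ∀ n, 0 ≤ L n) (h : CondI1 L) {ρ : ℝ} (hρ : 0 ≤ ρ) :
    CondI1 (fun n => L n ^ ρ) := fun n =>
  calc (L (n + 1) ^ ρ) ^ 2 = (L (n + 1) ^ 2) ^ ρ := rpow_pow_comm (hL _) ρ 2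
    _ ≤ (L n * L (n + 2)) ^ ρ := rpow_le_rpow (sq_nonneg _) (h n) hρ
    _ = L n ^ ρ * L (n + 2) ^ ρ := mul_rpow (hL n) (hL _)

lemma CondI2.rpow (hL : ∀ n, 1 ≤ L n) (h : CondI2 L) {ρ : ℝ} (hρ : 1 ≤ ρ) :
    CondI2 (fun n => L n ^ ρ) := by
  obtain ⟨H₁, hH₁, H₂, hH₂, hbound⟩ := h
  exact ⟨H₁, hH₁, H₂, hH₂, fun n => (hbound n).trans (self_le_rpow_of_one_le (hL n) hρ)⟩

lemma CondI4.rpow (hL : ∀ n, 0 < L n) (h : CondI4 L) {ρ : ℝ} (hρ : 0 < ρ) :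
    CondI4 (fun n => L n ^ ρ) := by
  intro δ hδ
  obtain ⟨δ', hδ', hroot⟩ : ∃ δ' > 0, (1 + δ') ^ ρ = 1 + δ :=
    ⟨(1 + δ) ^ ρ⁻¹ - 1, sub_pos.2 (one_lt_rpow (by linarith) (inv_pos.2 hρ)), by
      rw [add_sub_cancel, ← rpow_mul (by linarith), inv_mul_cancel₀ hρ.ne', rpow_one]⟩
  obtain ⟨p, hp, t, ht, hbound⟩ := h δ' hδ'
  refine ⟨p ^ ρ, rpow_pos_of_pos hp ρ, t ^ ρ, one_lt_rpow ht hρ, fun n m => ?_⟩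
  have ht₀ : 0 ≤ t := by linarith
  have hden : 0 < L m * (1 + δ') ^ m := mul_pos (hL m) (by positivity)
  calc L (m + n) ^ ρ / (L m ^ ρ * (1 + δ) ^ m)
      = (L (m + n) / (L m * (1 + δ') ^ m)) ^ ρ := by
        rw [div_rpow (hL _).le hden.le, mul_rpow (hL _).le (by positivity),
          ← rpow_pow_comm (by positivity), hroot]
    _ ≤ (p * t ^ n * L n) ^ ρ := rpow_le_rpow (div_pos (hL _) hden).le (hbound n m) hρ.le
    _ = p ^ ρ * (t ^ ρ) ^ n * L n ^ ρ := by
        rw [mul_rpow (by positivity) (hL n).le, mul_rpow hp.le (by positivity), rpow_pow_comm ht₀]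

end Rpow

/-- A quantitative form of (i3). The upper bound is what makes the `liminf` in (i3) a genuine
limit inferior: for a sequence unbounded above, `Filter.liminf` in `ℝ` is a junk value. -/
def LinearLogGap (L : ℕ → ℝ) : Prop :=
  ∀ s : ℝ, 1 < s → ∃ c : ℝ, 0 < c ∧ ∃ C : ℝ, ∀ᶠ n : ℕ in atTop,
    c * n ≤ log (L ⌊s * n⌋₊) - s * log (L n) ∧ log (L ⌊s * n⌋₊) - s * log (L n) ≤ C * n

section LinearLogGap

variable {L : ℕ → ℝ}

lemma LinearLogGap.rpow (hL : ∀ n, 0 < L n) (h : LinearLogGap L) {ρ : ℝ} (hρ : 0 < ρ) :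
    LinearLogGap (fun n => L n ^ ρ) := by
  intro s hs
  obtain ⟨c, hc, C, hbounds⟩ := h s hs
  refine ⟨ρ * c, mul_pos hρ hc, ρ * C, hbounds.mono fun n ⟨hlo, hhi⟩ => ?_⟩
  simp only [log_rpow (hL _)]
  constructor
  · linarith [mul_le_mul_of_nonneg_left hlo hρ.le]
  · linarith [mul_le_mul_of_nonneg_left hhi hρ.le]

lemma LinearLogGap.condI3 (hL : ∀ n, 0 < L n) (h : LinearLogGap L) : CondI3 L := by
  intro s hs
  obtain ⟨c, hc, C, hbounds⟩ := h s hs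
  have hroot : ∀ᶠ n : ℕ in atTop,
      exp c ≤ (L ⌊s * n⌋₊ / L n ^ s) ^ ((1 : ℝ) / n) ∧
        (L ⌊s * n⌋₊ / L n ^ s) ^ ((1 : ℝ) / n) ≤ exp C := by
    filter_upwards [hbounds, eventually_ge_atTop 1] with n ⟨hlo, hhi⟩ hn
    have hn₀ : (0 : ℝ) < n := by exact_mod_cast hn
    have hexp : (L ⌊s * n⌋₊ / L n ^ s) ^ ((1 : ℝ) / n)
        = exp ((log (L ⌊s * n⌋₊) - s * log (L n)) / n) := by
      rw [rpow_def_of_pos (div_pos (hL _) (rpow_pos_of_pos (hL n) s)),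
        log_div (hL _).ne' (rpow_pos_of_pos (hL n) s).ne', log_rpow (hL n)]
      ring_nf
    rw [hexp, exp_le_exp, exp_le_exp, le_div_iff₀ hn₀, div_le_iff₀ hn₀]
    exact ⟨hlo, hhi⟩
  calc 1 < exp c := one_lt_exp_iff.2 hc
    _ ≤ _ := le_liminf_of_le (isCoboundedUnder_ge_of_eventually_le _ (hroot.mono fun _ h => h.2))
        (hroot.mono fun _ h => h.1)

end LinearLogGap

lemma mul_log_add_le_mul_log {a b : ℝ} (ha : 0 < a) (hb : 0 < b) :
    a * log a + (b - a) * (log a + 1) ≤ b * log b := by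
  have h := one_sub_inv_le_log_of_pos (div_pos hb ha)
  rw [log_div hb.ne' ha.ne', inv_div] at h
  have h' := mul_le_mul_of_nonneg_left h hb.le
  rw [mul_sub, mul_one, mul_div_cancel₀ _ hb.ne'] at h'
  nlinarith

lemma log_factorial_le_mul_log (n : ℕ) : log (n ! : ℝ) ≤ n * log n := by
  rcases n.eq_zero_or_pos with rfl | hn
  · simp
  rw [← log_pow]
  exact log_le_log (by positivity) (by exact_mod_cast n.factorial_le_pow)

lemma mul_log_sub_le_log_factorial {n : ℕ} (hn : n ≠ 0) : n * log n - n ≤ log (n ! : ℝ) := by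
  have h := Stirling.le_log_factorial_stirling hn
  have hlog : 0 ≤ log (n : ℝ) := log_natCast_nonneg n
  have hpi : 0 ≤ log (2 * π) := log_nonneg (by linarith [pi_gt_three])
  linarith

lemma log_factorial_le_stirling {n : ℕ} (hn : n ≠ 0) :
    log (n ! : ℝ) ≤ n * log n - n + log n / 2 + 1 := by
  obtain ⟨m, rfl⟩ := Nat.exists_eq_add_one_of_ne_zero hn
  have hseq : Stirling.stirlingSeq (m + 1) ≤ Stirling.stirlingSeq 1 :=
    Stirling.stirlingSeq'_antitone (Nat.zero_le m)
  have hlog := log_le_log (Stirling.stirlingSeq'_pos m) hseq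
  rw [Stirling.log_stirlingSeq_formula, Stirling.stirlingSeq_one, log_div (exp_ne_zero 1)
    (by positivity), log_exp, log_sqrt zero_le_two,
    log_mul two_ne_zero (by positivity), log_div (by positivity) (exp_ne_zero 1), log_exp] at hlog
  linarith

lemma eventually_log_add_one_le {ε : ℝ} (hε : 0 < ε) :
    ∀ᶠ n : ℕ in atTop, log (n + 1) ≤ ε * n := by
  have hsucc : Tendsto (fun n : ℕ => (n : ℝ) + 1) atTop atTop :=
    tendsto_atTop_add_const_right _ 1 tendsto_natCast_atTop_atTop
  filter_upwards [hsucc.eventually (isLittleO_log_id_atTop.bound (half_pos hε)),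
    eventually_ge_atTop 1] with n hlog hn
  have hn' : (1 : ℝ) ≤ n := by exact_mod_cast hn
  rw [norm_of_nonneg (log_nonneg (by linarith)), id, norm_of_nonneg (by positivity)] at hlog
  nlinarith

lemma Nat.choose_mul_pow_le_one_add_pow {R : Type*} [CommSemiring R] [PartialOrder R]
    [IsOrderedRing R] {x : R} (hx : 0 ≤ x) (n k : ℕ) : (n.choose k : R) * x ^ k ≤ (1 + x) ^ n := by
  rcases lt_or_ge n k with hnk | hkn
  · simp [Nat.choose_eq_zero_of_lt hnk, pow_nonneg (add_nonneg zero_le_one hx)]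
  rw [add_comm, add_pow]
  calc (n.choose k : R) * x ^ k = x ^ k * 1 ^ (n - k) * n.choose k := by ring
    _ ≤ ∑ m ∈ Finset.range (n + 1), x ^ m * 1 ^ (n - m) * n.choose m :=
      Finset.single_le_sum (f := fun m => x ^ m * 1 ^ (n - m) * (n.choose m : R))
        (fun m _ => mul_nonneg (mul_nonneg (pow_nonneg hx m) (pow_nonneg zero_le_one _))
          (Nat.cast_nonneg _)) (Finset.mem_range.2 (Nat.lt_succ_of_le hkn))

lemma condI1_factorial_succ : CondI1 (fun n => ((n + 1)! : ℝ)) := by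
  intro n
  have hfac : ((n + 1)! : ℝ) ≠ 0 := by positivity
  simp only [Nat.factorial_succ (n + 1 + 1), Nat.factorial_succ (n + 1), Nat.cast_mul]
  push_cast
  nlinarith [sq_nonneg ((n + 1)! : ℝ), mul_self_pos.2 hfac]

lemma condI2_factorial_succ : CondI2 (fun n => ((n + 1)! : ℝ)) :=
  ⟨1, one_pos, 1, one_pos, fun n => by
    simpa using Nat.factorial_le (Nat.le_succ n)⟩

lemma le_log_factorial_floor_sub {s : ℝ} (hs : 1 < s) {n : ℕ} (hn : 1 ≤ n) :
    s * n * log s - 3 / 2 * s * log (n + 1) - s ≤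
      log ((⌊s * n⌋₊ + 1)! : ℝ) - s * log ((n + 1)! : ℝ) := by
  have hn' : (1 : ℝ) ≤ n := by exact_mod_cast hn
  have hsn : 1 ≤ s * n := by nlinarith
  have hfloor : s * n ≤ (⌊s * n⌋₊ : ℝ) + 1 := (Nat.lt_floor_add_one _).le
  have hlower := mul_log_sub_le_log_factorial (n := ⌊s * n⌋₊ + 1) (by omega)
  have hupper := log_factorial_le_stirling (n := n + 1) (by omega)
  push_cast at hlower hupper
  have htangent_floor := mul_log_add_le_mul_log (a := s * n) (b := ⌊s * n⌋₊ + 1) (by linarith)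
    (by positivity)
  have htangent_n := mul_log_add_le_mul_log (a := n + 1) (b := n) (by positivity) (by linarith)
  rw [log_mul (by positivity) (by positivity)] at htangent_floor
  have hgap : 0 ≤ ((⌊s * n⌋₊ : ℝ) + 1 - s * n) * (log s + log n) :=
    mul_nonneg (by linarith) (by
      rw [← log_mul (by positivity) (by positivity)]
      exact log_nonneg hsn)
  nlinarith [mul_le_mul_of_nonneg_left hupper (by linarith : (0 : ℝ) ≤ s),
    mul_le_mul_of_nonneg_left htangent_n (by linarith : (0 : ℝ) ≤ s)]

lemma log_factorial_floor_sub_le {s : ℝ} (hs : 1 < s) (n : ℕ) :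
    log ((⌊s * n⌋₊ + 1)! : ℝ) - s * log ((n + 1)! : ℝ) ≤ s * (n + 1) * (log s + 1) := by
  have hupper := log_factorial_le_mul_log (⌊s * n⌋₊ + 1)
  have hlower := mul_log_sub_le_log_factorial (n := n + 1) (by omega)
  push_cast at hupper hlower
  have hfloor : (⌊s * n⌋₊ : ℝ) + 1 ≤ s * (n + 1) := by
    nlinarith [Nat.floor_le (by positivity : 0 ≤ s * n)]
  have hmono : ((⌊s * n⌋₊ : ℝ) + 1) * log ((⌊s * n⌋₊ : ℝ) + 1) ≤
      s * (n + 1) * (log s + log (n + 1)) := by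
    rw [← log_mul (by positivity) (by positivity)]
    exact mul_le_mul hfloor (log_le_log (by positivity) hfloor) (log_nonneg (by simp))
      (by positivity)
  nlinarith [mul_le_mul_of_nonneg_left hlower (by linarith : (0 : ℝ) ≤ s)]

lemma linearLogGap_factorial_succ : LinearLogGap (fun n => ((n + 1)! : ℝ)) := by
  intro s hs
  have hlogs : 0 < log s := log_pos hs
  refine ⟨s * log s / 2, by positivity, 2 * s * (log s + 1), ?_⟩
  filter_upwards [eventually_log_add_one_le (by positivity : 0 < log s / 6),
    tendsto_natCast_atTop_atTop.eventually (eventually_ge_atTop (4 / log s)),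
    eventually_ge_atTop 1] with n hlog hlarge hn
  have hn' : (1 : ℝ) ≤ n := by exact_mod_cast hn
  have hs_le : s ≤ s * log s / 4 * n := by
    rw [div_le_iff₀ hlogs] at hlarge
    nlinarith
  have hlower := le_log_factorial_floor_sub hs hn
  have hupper := log_factorial_floor_sub_le hs n
  constructor
  · nlinarith [mul_le_mul_of_nonneg_left hlog (by linarith : (0 : ℝ) ≤ s)]
  · nlinarith [mul_le_mul_of_nonneg_left (by linarith : (n : ℝ) + 1 ≤ 2 * n)
      (by positivity : 0 ≤ s * (log s + 1))]

lemma condI4_factorial_succ : CondI4 (fun n => ((n + 1)! : ℝ)) := by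
  intro δ hδ
  refine ⟨1 + δ, by linarith, (1 + δ) / δ, (one_lt_div hδ).2 (by linarith), fun n m => ?_⟩
  have hsplit : ((m + 1 + n).choose n : ℝ) * (m + 1)! * n ! = (m + n + 1)! := by
    rw [show m + n + 1 = m + 1 + n by ring]
    exact_mod_cast Nat.add_choose_mul_factorial_mul_factorial (m + 1) n
  have hbinom := Nat.choose_mul_pow_le_one_add_pow hδ.le (m + 1 + n) n
  have hfac : (n ! : ℝ) ≤ (n + 1)! := by exact_mod_cast Nat.factorial_le (Nat.le_succ n)
  simp only
  rw [div_le_iff₀ (by positivity), ← hsplit, ← mul_le_mul_iff_of_pos_right (pow_pos hδ n)]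
  calc ((m + 1 + n).choose n : ℝ) * (m + 1)! * n ! * δ ^ n
      = ((m + 1 + n).choose n * δ ^ n) * ((m + 1)! * n !) := by ring
    _ ≤ (1 + δ) ^ (m + 1 + n) * ((m + 1)! * (n + 1)!) := by gcongr
    _ = (1 + δ) * ((1 + δ) / δ) ^ n * (n + 1)! * ((m + 1)! * (1 + δ) ^ m) * δ ^ n := by
      rw [div_pow]
      field_simp
      ring

theorem stmt_8 (ρ : ℝ) (hρ : 1 ≤ ρ) :
    ClassM (fun n : ℕ => (Real.Gamma ((n : ℝ) + 2)) ^ ρ) := by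
  have hρ₀ : 0 < ρ := by linarith
  have hGamma : (fun n : ℕ => (Real.Gamma ((n : ℝ) + 2)) ^ ρ) = fun n => ((n + 1)! : ℝ) ^ ρ := by
    funext n
    rw [show (n : ℝ) + 2 = ((n + 1 : ℕ) : ℝ) + 1 by push_cast; ring, Gamma_nat_eq_factorial]
  have hpos : ∀ n, 0 < ((n + 1)! : ℝ) := fun n => by positivity
  have hone : ∀ n, 1 ≤ ((n + 1)! : ℝ) := fun n => by exact_mod_cast (n + 1).factorial_pos
  rw [hGamma]
  refine ⟨fun n => rpow_pos_of_pos (hpos n) ρ,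
    fun a b hab => rpow_le_rpow (hpos a).le
      (by exact_mod_cast Nat.factorial_le (Nat.succ_le_succ hab)) hρ₀.le,
    by simp,
    condI1_factorial_succ.rpow (fun n => (hpos n).le) hρ₀.le,
    condI2_factorial_succ.rpow hone hρ,
    (linearLogGap_factorial_succ.rpow hpos hρ₀).condI3 fun n => rpow_pos_of_pos (hpos n) ρ,
    condI4_factorial_succ.rpow hpos hρ₀⟩
end

section
/- The sequence ((n+1)^{(n+1)·arctan(n+1)})_{n≥0} belongs to the class 𝓜, i.e. it is increasing, has first term 1, and satisfies conditions (i1), (i2), (i3), (i4). -/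
open Filter

/-! Write the sequence as `exp (h (n + 1))` with `h y = y * arctan y * log y`. Monotonicity and
convexity of `h` on `[1, ∞)` give monotonicity and (i1). Since `π / 2 - 1 / y ≤ arctan y < π / 2`,
`h y` is `π / 2 * y * log y` up to an error of at most `log y`, so (i2)–(i4) reduce to facts about
`y * log y`: `h (n + 1) ≥ n * log (n + 1)` gives (i2); `y * log y` turns the dilation
`y ↦ s * y` into the additive term `s * log s * y`, so
`(h (⌊s n⌋ + 1) - s * h (n + 1)) / n → π / 2 * s * log s > 0`, which gives (i3); and
`(M + N) * log (M + N) ≤ M * log M + N * log N + ε * M + (ε - log ε) * N` gives (i4). -/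

open Real Set Topology

theorem arctan_le_self_of_nonneg {x : ℝ} (hx : 0 ≤ x) : arctan x ≤ x := by
  simpa [tan_arctan] using le_tan (arctan_nonneg.2 hx) (arctan_lt_pi_div_two x)

theorem pi_div_two_sub_inv_le_arctan {x : ℝ} (hx : 0 < x) : π / 2 - x⁻¹ ≤ arctan x := by
  have h := arctan_le_self_of_nonneg (inv_nonneg.2 hx.le)
  rw [arctan_inv_of_pos hx] at h
  linarith

theorem mul_log_sub_log_le_sub {a b : ℝ} (ha : 0 < a) (hb : 0 < b) :
    a * (log b - log a) ≤ b - a := by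
  rw [← log_div hb.ne' ha.ne']
  calc a * log (b / a) ≤ a * (b / a - 1) :=
        mul_le_mul_of_nonneg_left (log_le_sub_one_of_pos (div_pos hb ha)) ha.le
    _ = b - a := by field_simp

theorem log_le_mul_sub_log_sub_one {ε x : ℝ} (hε : 0 < ε) (hx : 0 < x) :
    log x ≤ ε * x - log ε - 1 := by
  have h := log_le_sub_one_of_pos (mul_pos hε hx)
  rw [log_mul hε.ne' hx.ne'] at h
  linarith

theorem add_mul_log_add_sub_le {M N ε : ℝ} (hM : 0 < M) (hN : 0 < N) (hε : 0 < ε) :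
    (M + N) * log (M + N) - M * log M - N * log N ≤ ε * M + (ε - log ε) * N := by
  have hMN : 0 < M + N := add_pos hM hN
  have hlogM := mul_log_sub_log_le_sub hM hMN
  have hlogN : N * (log (M + N) - log N) ≤ ε * (M + N) - N * log ε - N := by
    rw [← log_div hMN.ne' hN.ne']
    calc N * log ((M + N) / N) ≤ N * (ε * ((M + N) / N) - log ε - 1) :=
          mul_le_mul_of_nonneg_left (log_le_mul_sub_log_sub_one hε (div_pos hMN hN)) hN.le
      _ = ε * (M + N) - N * log ε - N := by field_simp
  linarith

theorem abs_mul_log_sub_mul_log_le {y z : ℝ} (hy : 1 ≤ y) (hyz : y ≤ z) (hz : z ≤ y + 1) :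
    |z * log z - y * log y| ≤ log z + 1 := by
  have hy0 : 0 < y := by linarith
  have hlog := mul_log_sub_log_le_sub hy0 (hy0.trans_le hyz)
  have hmono : y * log y ≤ z * log z :=
    mul_le_mul hyz (log_le_log hy0 hyz) (log_nonneg hy) (by linarith)
  have hlogz : 0 ≤ log z := log_nonneg (by linarith)
  rw [abs_of_nonneg (by linarith)]
  nlinarith

section ExpSequences

variable {φ : ℕ → ℝ}

theorem condI1_exp (h : ∀ n, 2 * φ (n + 1) ≤ φ n + φ (n + 2)) :
    CondI1 (fun n => exp (φ n)) := fun n => by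
  rw [← exp_nat_mul, ← exp_add]
  exact exp_le_exp.2 (by exact_mod_cast h n)

theorem condI3_exp
    (h : ∀ s : ℝ, 1 < s → ∃ c > 0,
      Tendsto (fun n : ℕ => (φ ⌊s * n⌋₊ - s * φ n) / n) atTop (𝓝 c)) :
    CondI3 (fun n => exp (φ n)) := by
  intro s hs
  obtain ⟨c, hc, hlim⟩ := h s hs
  have hrw : (fun n : ℕ => (exp (φ ⌊s * n⌋₊) / exp (φ n) ^ s) ^ ((1 : ℝ) / n))
      = fun n : ℕ => exp ((φ ⌊s * n⌋₊ - s * φ n) / n) := by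
    -- also at `n = 0`, where `1 / 0 = 0` makes both sides `1`
    ext n
    rw [← exp_mul, ← exp_sub, ← exp_mul, div_eq_mul_one_div (_ - _), mul_comm (φ n)]
  have hexp : Tendsto (fun n : ℕ => exp ((φ ⌊s * n⌋₊ - s * φ n) / n)) atTop (𝓝 (exp c)) :=
    (continuous_exp.tendsto c).comp hlim
  rw [hrw, hexp.liminf_eq]
  exact one_lt_exp_iff.2 hc

theorem condI4_exp
    (h : ∀ d : ℝ, 0 < d → ∃ C > 0, ∀ m n : ℕ, φ (m + n) ≤ φ m + φ n + d * m + C * (n + 1)) :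
    CondI4 (fun n => exp (φ n)) := by
  intro δ hδ
  obtain ⟨C, hC, hφ⟩ := h (log (1 + δ)) (log_pos (by linarith))
  refine ⟨exp C, exp_pos C, exp C, one_lt_exp_iff.2 hC, fun n m => ?_⟩
  rw [← exp_log (by linarith : 0 < 1 + δ), ← exp_nat_mul, ← exp_nat_mul, ← exp_add,
    ← exp_sub, ← exp_add, ← exp_add]
  exact exp_le_exp.2 (by linarith [hφ m n])

end ExpSequences

noncomputable def logArctanPow (y : ℝ) : ℝ := y * arctan y * log y

theorem logArctanPow_monotoneOn : MonotoneOn logArctanPow (Ici 1) := by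
  intro x (hx : 1 ≤ x) y (hy : 1 ≤ y) hxy
  have harctan : 0 ≤ arctan x := arctan_nonneg.2 (by linarith)
  have harctan' : 0 ≤ arctan y := harctan.trans (arctan_strictMono.monotone hxy)
  exact mul_le_mul (mul_le_mul hxy (arctan_strictMono.monotone hxy) harctan (by linarith))
    (log_le_log (by linarith) hxy) (log_nonneg hx) (mul_nonneg (by linarith) harctan')

theorem hasDerivAt_logArctanPow {y : ℝ} (hy : 0 < y) :
    HasDerivAt logArctanPow ((arctan y + y / (1 + y ^ 2)) * log y + arctan y) y := by
  have h := (((hasDerivAt_id y).mul (hasDerivAt_arctan y)).mul (hasDerivAt_log hy.ne'))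
  refine h.congr_deriv ?_
  simp only [id, Pi.mul_apply]
  field_simp

theorem hasDerivAt_deriv_logArctanPow {y : ℝ} (hy : 0 < y) :
    HasDerivAt (fun y => (arctan y + y / (1 + y ^ 2)) * log y + arctan y)
      (2 / (1 + y ^ 2) ^ 2 * log y + (arctan y + y / (1 + y ^ 2)) / y + 1 / (1 + y ^ 2)) y := by
  have hsq : HasDerivAt (fun y : ℝ => 1 + y ^ 2) (2 * y) y := by
    simpa using (hasDerivAt_pow 2 y).const_add 1
  have h := (((hasDerivAt_arctan y).add ((hasDerivAt_id y).div hsq (by positivity))).mul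
    (hasDerivAt_log hy.ne')).add (hasDerivAt_arctan y)
  refine h.congr_deriv ?_
  simp only [id, Pi.add_apply, Pi.div_apply]
  field_simp
  ring

theorem logArctanPow_convexOn : ConvexOn ℝ (Ici 1) logArctanPow := by
  have hcont : ContinuousOn logArctanPow (Ici 1) := fun y (hy : 1 ≤ y) =>
    ((continuous_id.mul continuous_arctan).continuousAt.mul
      (continuousAt_log (by linarith))).continuousWithinAt
  refine convexOn_of_hasDerivWithinAt2_nonneg (convex_Ici 1) hcont
    (fun y hy => (hasDerivAt_logArctanPow ?_).hasDerivWithinAt)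
    (fun y hy => (hasDerivAt_deriv_logArctanPow ?_).hasDerivWithinAt) fun y hy => ?_
  all_goals rw [interior_Ici, mem_Ioi] at hy
  · linarith
  · linarith
  · have hy0 : 0 < y := by linarith
    have := arctan_nonneg.2 hy0.le
    have := log_nonneg hy.le
    positivity

theorem logArctanPow_le {y : ℝ} (hy : 1 ≤ y) : logArctanPow y ≤ π / 2 * (y * log y) := by
  have h : 0 ≤ y * log y := mul_nonneg (by linarith) (log_nonneg hy)
  calc logArctanPow y = arctan y * (y * log y) := by unfold logArctanPow; ring
    _ ≤ π / 2 * (y * log y) := mul_le_mul_of_nonneg_right (arctan_lt_pi_div_two y).le h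

theorem le_logArctanPow {y : ℝ} (hy : 1 ≤ y) :
    π / 2 * (y * log y) - log y ≤ logArctanPow y := by
  have hy0 : 0 < y := by linarith
  calc π / 2 * (y * log y) - log y = (π / 2 - y⁻¹) * (y * log y) := by field_simp
    _ ≤ arctan y * (y * log y) := mul_le_mul_of_nonneg_right
        (pi_div_two_sub_inv_le_arctan hy0) (mul_nonneg hy0.le (log_nonneg hy))
    _ = logArctanPow y := by unfold logArctanPow; ring

theorem logArctanPow_add_le {d : ℝ} (hd : 0 < d) :
    ∃ C > 0, ∀ M N : ℝ, 1 ≤ M → 1 ≤ N →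
      logArctanPow (M + N) ≤ logArctanPow M + logArctanPow N + d * M + C * N := by
  -- `ε = d / π` makes the `M`-coefficient `π / 2 * ε = d / 2`; the other `d / 2` absorbs `log M`
  set ε := d / π
  set A := π / 2 * (ε - log ε) + 1
  set B := -log (d / 2) - 1
  refine ⟨|A| + |B| + 1, by positivity, fun M N hM hN => ?_⟩
  have hsplit := mul_le_mul_of_nonneg_left
    (add_mul_log_add_sub_le (by linarith : 0 < M) (by linarith : 0 < N) (by positivity : 0 < ε))
    (by positivity : 0 ≤ π / 2)
  have hsplit' : π / 2 * (ε * M + (ε - log ε) * N) = d / 2 * M + (A - 1) * N := by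
    simp only [ε, A]
    field_simp
    ring
  have hlogM := log_le_mul_sub_log_sub_one (by positivity : 0 < d / 2) (by linarith : 0 < M)
  have hlogN : log N ≤ N := (log_le_sub_one_of_pos (by linarith)).trans (by linarith)
  have hAB : A * N + B ≤ (|A| + |B| + 1) * N := by
    have hA := mul_le_mul_of_nonneg_right (le_abs_self A) (by linarith : 0 ≤ N)
    have hB := le_mul_of_one_le_right (abs_nonneg B) hN
    linarith [le_abs_self B]
  have hMN := logArctanPow_le (by linarith : 1 ≤ M + N)
  have hM' := le_logArctanPow hM
  have hN' := le_logArctanPow hN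
  linarith

theorem abs_logArctanPow_sub_le {y : ℝ} (hy : 1 ≤ y) :
    |logArctanPow y - π / 2 * (y * log y)| ≤ log y :=
  abs_sub_le_iff.2
    ⟨by linarith [logArctanPow_le hy, log_nonneg hy], by linarith [le_logArctanPow hy]⟩

theorem abs_logArctanPow_sub_mul_le {s x z : ℝ} (hs : 1 ≤ s) (hx : 1 ≤ x) (hz : s * x ≤ z)
    (hz' : z ≤ s * x + 1) :
    |logArctanPow z - s * logArctanPow (x + 1) - π / 2 * s * log s * x|
      ≤ (1 + π / 2) * (s + 1) * (1 + log s + log (x + 1)) := by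
  have hsx : 1 ≤ s * x := one_le_mul_of_one_le_of_one_le hs hx
  set D₁ := logArctanPow z - π / 2 * (z * log z)
  set D₂ := logArctanPow (x + 1) - π / 2 * ((x + 1) * log (x + 1))
  set G₁ := z * log z - s * x * log (s * x)
  set G₂ := (x + 1) * log (x + 1) - x * log x
  have hD₁ : |D₁| ≤ log z := abs_logArctanPow_sub_le (by linarith)
  have hD₂ : |D₂| ≤ log (x + 1) := abs_logArctanPow_sub_le (by linarith)
  have hG₁ : |G₁| ≤ log z + 1 := abs_mul_log_sub_mul_log_le hsx hz hz'
  have hG₂ : |G₂| ≤ log (x + 1) + 1 := abs_mul_log_sub_mul_log_le hx (by linarith) le_rfl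
  have hlogz : log z ≤ log s + log (x + 1) := by
    rw [← log_mul (by positivity) (by positivity)]
    exact log_le_log (by linarith) (by linarith)
  have hlogs : 0 ≤ log s := log_nonneg hs
  have hlogx : 0 ≤ log (x + 1) := log_nonneg (by linarith)
  calc |logArctanPow z - s * logArctanPow (x + 1) - π / 2 * s * log s * x|
      = |D₁ - s * D₂ + π / 2 * (G₁ - s * G₂)| := by
        simp only [D₁, D₂, G₁, G₂]
        rw [log_mul (by positivity) (by positivity)]
        ring_nf
    _ ≤ |D₁| + s * |D₂| + π / 2 * (|G₁| + s * |G₂|) := by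
        refine (abs_add_le _ _).trans (add_le_add ((abs_sub _ _).trans ?_) ?_)
        · rw [abs_mul, abs_of_pos (by positivity : 0 < s)]
        · rw [abs_mul, abs_of_pos (by positivity : 0 < π / 2)]
          refine mul_le_mul_of_nonneg_left ((abs_sub _ _).trans ?_) (by positivity)
          rw [abs_mul, abs_of_pos (by positivity : 0 < s)]
    _ ≤ (1 + π / 2) * (s + 1) * (1 + log s + log (x + 1)) := by
        have hs0 : 0 ≤ s := by linarith
        have hD₂' := mul_le_mul_of_nonneg_left hD₂ hs0
        have hG₂' := mul_le_mul_of_nonneg_left hG₂ hs0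
        have hG₁' : |G₁| ≤ log s + log (x + 1) + 1 := by linarith
        have hG := mul_le_mul_of_nonneg_left (add_le_add hG₁' hG₂') (by positivity : 0 ≤ π / 2)
        nlinarith [mul_nonneg hs0 hlogs, mul_nonneg (mul_nonneg pi_pos.le hs0) hlogs, pi_pos]

noncomputable def logArctanPowSeq (n : ℕ) : ℝ := logArctanPow (n + 1)

theorem one_le_natCast_add_one (n : ℕ) : (1 : ℝ) ≤ n + 1 := by
  linarith [n.cast_nonneg (α := ℝ)]

theorem logArctanPowSeq_monotone : Monotone logArctanPowSeq := fun m n hmn =>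
  logArctanPow_monotoneOn (one_le_natCast_add_one m) (one_le_natCast_add_one n)
    (by gcongr)

theorem logArctanPowSeq_zero : logArctanPowSeq 0 = 0 := by
  simp [logArctanPowSeq, logArctanPow]

theorem two_mul_logArctanPowSeq_succ_le (n : ℕ) :
    2 * logArctanPowSeq (n + 1) ≤ logArctanPowSeq n + logArctanPowSeq (n + 2) := by
  have h := logArctanPow_convexOn.2 (one_le_natCast_add_one n) (one_le_natCast_add_one (n + 2))
    (by norm_num : (0 : ℝ) ≤ 1 / 2) (by norm_num : (0 : ℝ) ≤ 1 / 2) (by norm_num)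
  have hmid : (1 / 2 : ℝ) • ((n : ℝ) + 1) + (1 / 2 : ℝ) • (((n + 2 : ℕ) : ℝ) + 1)
      = ((n + 1 : ℕ) : ℝ) + 1 := by
    push_cast
    simp only [smul_eq_mul]
    ring
  rw [hmid, smul_eq_mul, smul_eq_mul] at h
  unfold logArctanPowSeq
  linarith

theorem factorial_le_exp_logArctanPowSeq (n : ℕ) :
    (n.factorial : ℝ) ≤ exp (logArctanPowSeq n) := by
  have hn := one_le_natCast_add_one n
  have hlog : n * log (n + 1) ≤ logArctanPowSeq n := by
    have hπ : 1 ≤ π / 2 := by linarith [pi_gt_three]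
    have := mul_le_mul_of_nonneg_right hπ
      (mul_nonneg (by linarith : (0 : ℝ) ≤ n + 1) (log_nonneg hn))
    have := le_logArctanPow hn
    unfold logArctanPowSeq
    linarith
  calc (n.factorial : ℝ) ≤ (n : ℝ) ^ n := by exact_mod_cast n.factorial_le_pow
    _ ≤ ((n : ℝ) + 1) ^ n := by gcongr; linarith
    _ = exp (n * log (n + 1)) := by rw [← rpow_natCast, rpow_def_of_pos (by linarith), mul_comm]
    _ ≤ exp (logArctanPowSeq n) := exp_le_exp.2 hlog

theorem logArctanPowSeq_add_le {d : ℝ} (hd : 0 < d) :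
    ∃ C > 0, ∀ m n : ℕ, logArctanPowSeq (m + n)
      ≤ logArctanPowSeq m + logArctanPowSeq n + d * m + C * (n + 1) := by
  obtain ⟨C, hC, hadd⟩ := logArctanPow_add_le hd
  refine ⟨C + d, by positivity, fun m n => ?_⟩
  have hm := one_le_natCast_add_one m
  have hn := one_le_natCast_add_one n
  have hmono : logArctanPowSeq (m + n) ≤ logArctanPow ((m + 1) + (n + 1)) :=
    logArctanPow_monotoneOn (one_le_natCast_add_one _) (show (1 : ℝ) ≤ _ by linarith)
      (by push_cast; linarith)
  have hsplit := hadd _ _ hm hn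
  unfold logArctanPowSeq at hmono ⊢
  push_cast at hmono ⊢
  linarith [mul_nonneg hd.le n.cast_nonneg]

theorem tendsto_const_add_log_natCast_add_one_div (c : ℝ) :
    Tendsto (fun n : ℕ => (c + log (n + 1)) / n) atTop (𝓝 0) := by
  have hlog := (tendsto_pow_log_div_mul_add_atTop 1 (-1) 1 one_ne_zero).comp
    (tendsto_atTop_add_const_right _ 1 (tendsto_natCast_atTop_atTop (R := ℝ)))
  have h := (tendsto_const_div_atTop_nhds_zero_nat c).add hlog
  rw [add_zero] at h
  refine h.congr fun n => ?_
  simp [add_div]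

theorem tendsto_logArctanPowSeq_floor_mul {s : ℝ} (hs : 1 ≤ s) :
    Tendsto (fun n : ℕ => (logArctanPowSeq ⌊s * n⌋₊ - s * logArctanPowSeq n) / n) atTop
      (𝓝 (π / 2 * s * log s)) := by
  set K := (1 + π / 2) * (s + 1)
  rw [← tendsto_sub_nhds_zero_iff]
  have hbound := (tendsto_const_add_log_natCast_add_one_div (1 + log s)).const_mul K
  rw [mul_zero] at hbound
  refine squeeze_zero_norm' ?_ hbound
  filter_upwards [eventually_ge_atTop 1] with n hn
  have hn' : (1 : ℝ) ≤ n := by exact_mod_cast hn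
  have hsn : 0 ≤ s * n := by positivity
  have hest := abs_logArctanPow_sub_mul_le hs hn' (Nat.lt_floor_add_one (s * n)).le
    (by linarith [Nat.floor_le hsn])
  have hrw : (logArctanPowSeq ⌊s * n⌋₊ - s * logArctanPowSeq n) / n - π / 2 * s * log s
      = (logArctanPow (⌊s * n⌋₊ + 1) - s * logArctanPow (n + 1) - π / 2 * s * log s * n) / n := by
    unfold logArctanPowSeq
    field_simp
  rw [hrw, norm_div, Real.norm_eq_abs, Real.norm_natCast, mul_div_assoc']
  exact div_le_div_of_nonneg_right hest n.cast_nonneg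

theorem stmt_9 :
    ClassM (fun n : ℕ => ((n : ℝ) + 1) ^ (((n : ℝ) + 1) * Real.arctan ((n : ℝ) + 1))) := by
  have hL : (fun n : ℕ => ((n : ℝ) + 1) ^ (((n : ℝ) + 1) * Real.arctan ((n : ℝ) + 1)))
      = fun n => exp (logArctanPowSeq n) := by
    ext n
    rw [rpow_def_of_pos (by positivity), logArctanPowSeq, logArctanPow]
    ring_nf
  rw [hL]
  refine ⟨fun n => exp_pos _, exp_monotone.comp logArctanPowSeq_monotone,
    by simp only [logArctanPowSeq_zero, exp_zero], condI1_exp two_mul_logArctanPowSeq_succ_le,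
    ⟨1, one_pos, 1, one_pos, fun n => by simpa using factorial_le_exp_logArctanPowSeq n⟩,
    condI3_exp fun s hs => ⟨_, ?_, tendsto_logArctanPowSeq_floor_mul hs.le⟩,
    condI4_exp fun d hd => logArctanPowSeq_add_le hd⟩
  have := log_pos hs
  positivity
end

section
/- Let v₃(x) = (x+1)·ln(x+1)·arctan(x+1) for x ≥ 0. Then for all s > 1 and all x > 1, v₃(sx) − s·v₃(x) ≥ (π·s·x/4)·ln((s+1)/2) + (π/4)·ln(sx+1) − (π·s/2)·ln(x+1). -/
open Real

/-- The function v₃(x) = (x+1)·ln(x+1)·arctan(x+1). -/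
noncomputable def v₃ (x : ℝ) : ℝ := (x + 1) * Real.log (x + 1) * Real.arctan (x + 1)

theorem stmt_10 (s x : ℝ) (hs : 1 < s) (hx : 1 < x) :
    π * s * x / 4 * Real.log ((s + 1) / 2) + π / 4 * Real.log (s * x + 1)
      - π * s / 2 * Real.log (x + 1) ≤ v₃ (s * x) - s * v₃ x := by
  have hsx : 1 < s * x := by nlinarith
  have hs0 : (0:ℝ) < s := by linarith
  have hx0 : (0:ℝ) < x := by linarith
  set L := Real.log ((s + 1) / 2) with hLdef
  set M := Real.log (x + 1) with hMdef
  set L1 := Real.log (s * x + 1) with hL1def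
  set A1 := Real.arctan (s * x + 1) with hA1def
  set A2 := Real.arctan (x + 1) with hA2def
  have hL : 0 ≤ L := Real.log_nonneg (by linarith)
  have hM : 0 < M := Real.log_pos (by linarith)
  have hL1 : 0 < L1 := Real.log_pos (by linarith)
  have hsum : L + M ≤ L1 := by
    rw [hLdef, hMdef, hL1def, ← Real.log_mul (by positivity) (by positivity)]
    apply Real.log_le_log (by positivity)
    nlinarith
  have hA1q : π / 4 ≤ A1 := by
    rw [hA1def, ← Real.arctan_one]
    exact Real.arctan_strictMono.monotone (by nlinarith)
  have hA12 : A2 ≤ A1 := Real.arctan_strictMono.monotone (by nlinarith)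
  have hA2h : A2 ≤ π / 2 := le_of_lt (Real.arctan_lt_pi_div_two _)
  have h1 : 0 ≤ s * x * A1 * (L1 - (L + M)) := by
    have : 0 < A1 := lt_of_lt_of_le (by positivity) hA1q
    have := sub_nonneg.mpr hsum
    positivity
  have h2 : 0 ≤ s * x * L * (A1 - π / 4) := by
    have := sub_nonneg.mpr hA1q
    positivity
  have h3 : 0 ≤ s * x * M * (A1 - A2) := by
    have := sub_nonneg.mpr hA12
    positivity
  have h4 : 0 ≤ L1 * (A1 - π / 4) := by
    have := sub_nonneg.mpr hA1q
    positivity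
  have h5 : 0 ≤ s * M * (π / 2 - A2) := by
    have := sub_nonneg.mpr hA2h
    positivity
  have key : (s * x + 1) * L1 * A1 - s * ((x + 1) * M * A2)
      - (π * s * x / 4 * L + π / 4 * L1 - π * s / 2 * M)
      = s * x * A1 * (L1 - (L + M)) + s * x * L * (A1 - π / 4)
        + s * x * M * (A1 - A2) + L1 * (A1 - π / 4) + s * M * (π / 2 - A2) := by
    ring
  simp only [v₃, ← hLdef, ← hMdef, ← hL1def, ← hA1def, ← hA2def]
  linarith [key, h1, h2, h3, h4, h5]
end

section
/- Let v : [0,∞) → [0,∞) be a nonnegative increasing convex function with v(0) = 0 satisfying condition (V2). Then there exist constants a > 0 and b, c ∈ ℝ such that v(x) > a·x·ln x + b·x + c for all x ≥ 1. -/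
/-!
Iterate (V2) for one dilation factor `s > 1`: each application multiplies `v` by `s` and
gains a linear term `η x`, so `n` applications give
`v (sⁿ x) ≥ sⁿ v x + n (η / s) sⁿ x + O(sⁿ)`. Reaching `y ≥ 1` from a point `x ∈ [1, s)` takes
`n ≈ log y / log s` dilations, whence `v y ≥ η / (s log s) · y log y - O(y)`.
-/

open Finset Real

section Dilation

variable {f : ℝ → ℝ} {s η m : ℝ}

theorem le_apply_pow_mul_of_dilation (hs : 0 < s)
    (hf : ∀ x, 0 ≤ x → s * f x + η * x + m ≤ f (s * x)) (n : ℕ) {x : ℝ} (hx : 0 ≤ x) :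
    s ^ n * f x + n * (η / s) * (s ^ n * x) + (∑ i ∈ range n, s ^ i) * m ≤ f (s ^ n * x) := by
  induction n with
  | zero => simp
  | succ n ih =>
    have step := hf (s ^ n * x) (by positivity)
    rw [← mul_assoc s, ← pow_succ'] at step
    have hs' : s * (η / s) = η := mul_div_cancel₀ η hs.ne'
    calc s ^ (n + 1) * f x + ↑(n + 1) * (η / s) * (s ^ (n + 1) * x)
          + (∑ i ∈ range (n + 1), s ^ i) * m
        = s * (s ^ n * f x + n * (η / s) * (s ^ n * x) + (∑ i ∈ range n, s ^ i) * m)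
          + η * (s ^ n * x) + m := by
          rw [geom_sum_succ]
          push_cast
          linear_combination s ^ n * x * hs'
      _ ≤ s * f (s ^ n * x) + η * (s ^ n * x) + m := by gcongr
      _ ≤ f (s ^ (n + 1) * x) := step

theorem geom_sum_le_div_sub_one {n : ℕ} {y : ℝ} (hs : 1 < s) (hy : s ^ n ≤ y) :
    ∑ i ∈ range n, s ^ i ≤ y / (s - 1) := by
  rw [le_div_iff₀ (sub_pos.mpr hs), geom_sum_mul]
  linarith

theorem mul_log_sub_le_of_dilation (hs : 1 < s) (hη : 0 ≤ η)
    (hnonneg : ∀ x, 0 ≤ x → 0 ≤ f x)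
    (hf : ∀ x, 0 ≤ x → s * f x + η * x + m ≤ f (s * x)) {y : ℝ} (hy : 1 ≤ y) :
    η / (s * log s) * y * log y - (η / s + |m| / (s - 1)) * y ≤ f y := by
  obtain ⟨n, hny, hyn⟩ := exists_nat_pow_near hy hs
  have hs0 : 0 < s := by linarith
  have hy0 : 0 < y := by linarith
  have hlogs : 0 < log s := log_pos hs
  have hsn : s ^ n * (y / s ^ n) = y := mul_div_cancel₀ y (by positivity)
  have key := le_apply_pow_mul_of_dilation hs0 hf n (x := y / s ^ n) (by positivity)
  rw [hsn] at key
  have hlog_y : log y / log s ≤ n + 1 := by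
    rw [div_le_iff₀ hlogs, ← Nat.cast_add_one, ← log_pow]
    exact (log_lt_log hy0 hyn).le
  have hgain : η / (s * log s) * y * log y - η / s * y ≤ n * (η / s) * y := by
    have hgain' := mul_le_mul_of_nonneg_left hlog_y (by positivity : 0 ≤ η / s * y)
    have hsplit : η / (s * log s) * y * log y = η / s * y * (log y / log s) := by
      field_simp
    linarith
  have hconst : -(|m| / (s - 1) * y) ≤ (∑ i ∈ range n, s ^ i) * m := by
    have hsum := geom_sum_le_div_sub_one hs hny
    have hsum0 : 0 ≤ ∑ i ∈ range n, s ^ i := by positivity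
    calc -(|m| / (s - 1) * y) = -(|m| * (y / (s - 1))) := by ring
      _ ≤ -(|m| * ∑ i ∈ range n, s ^ i) := by gcongr
      _ ≤ (∑ i ∈ range n, s ^ i) * m := by
          nlinarith [neg_abs_le m]
  have hfx : 0 ≤ s ^ n * f (y / s ^ n) := mul_nonneg (by positivity) (hnonneg _ (by positivity))
  linarith

end Dilation

theorem stmt_11_general (v : ℝ → ℝ)
    (hnonneg : ∀ x ∈ Set.Ici (0 : ℝ), 0 ≤ v x)
    (hV2 : ∀ s : ℝ, 1 < s → ∃ η : ℝ, 0 < η ∧ ∃ m : ℝ,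
      ∀ x : ℝ, 0 ≤ x → s * v x + η * x + m ≤ v (s * x)) :
    ∃ a : ℝ, 0 < a ∧ ∃ b c : ℝ, ∀ x : ℝ, 1 ≤ x →
      a * x * Real.log x + b * x + c < v x := by
  obtain ⟨η, hη, m, hm⟩ := hV2 2 one_lt_two
  refine ⟨η / (2 * log 2), by positivity, -(η / 2 + |m| / (2 - 1)), -1,
    fun x hx => ?_⟩
  have := mul_log_sub_le_of_dilation one_lt_two hη.le hnonneg hm hx
  linarith

theorem stmt_11 (v : ℝ → ℝ)
    (hnonneg : ∀ x ∈ Set.Ici (0 : ℝ), 0 ≤ v x)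
    (hmono : MonotoneOn v (Set.Ici 0))
    (hconv : ConvexOn ℝ (Set.Ici 0) v)
    (hv0 : v 0 = 0)
    (hV2 : ∀ s : ℝ, 1 < s → ∃ η : ℝ, 0 < η ∧ ∃ m : ℝ,
      ∀ x : ℝ, 0 ≤ x → s * v x + η * x + m ≤ v (s * x)) :
    ∃ a : ℝ, 0 < a ∧ ∃ b c : ℝ, ∀ x : ℝ, 1 ≤ x →
      a * x * Real.log x + b * x + c < v x :=
  stmt_11_general v hnonneg hV2
end

section
/- Let v : [0,∞) → [0,∞) be a nonnegative increasing convex function with v(0) = 0, let ε > 0, and let a_ε > 0, b_ε ∈ ℝ be constants such that v(x+y) − v(x) − ε·x ≤ v(y) + a_ε·y + b_ε for all x, y ≥ 1. Then for all x ≥ 1, v(x) ≤ (2·v(1) + a_ε + 2·b_ε + ε)·x + ((a_ε + ε)/ln 2)·x·ln x − b_ε. -/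
theorem stmt_12 (v : ℝ → ℝ)
    (hnonneg : ∀ x ∈ Set.Ici (0 : ℝ), 0 ≤ v x)
    (hmono : MonotoneOn v (Set.Ici 0))
    (hconv : ConvexOn ℝ (Set.Ici 0) v)
    (hv0 : v 0 = 0)
    (ε a b : ℝ) (hε : 0 < ε) (ha : 0 < a)
    (hineq : ∀ x : ℝ, 1 ≤ x → ∀ y : ℝ, 1 ≤ y → v (x + y) - v x - ε * x ≤ v y + a * y + b) :
    ∀ x : ℝ, 1 ≤ x →
      v x ≤ (2 * v 1 + a + 2 * b + ε) * x + ((a + ε) / Real.log 2) * x * Real.log x - b := by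
  have hlog2 : 0 < Real.log 2 := Real.log_pos (by norm_num)
  have hC : 0 < a + ε := by linarith
  set K : ℝ := 2 * v 1 + a + 2 * b + ε with hK
  set D : ℝ := (a + ε) / Real.log 2 with hD
  have hDpos : 0 < D := div_pos hC hlog2
  set g : ℝ → ℝ := fun x => K * x + D * x * Real.log x - b with hg
  -- doubling inequality
  have hdouble : ∀ y : ℝ, 1 ≤ y → v (2 * y) ≤ 2 * v y + (a + ε) * y + b := by
    intro y hy
    have h := hineq y hy y hy
    have : y + y = 2 * y := by ring
    rw [this] at h
    nlinarith
  have hv1 : 0 ≤ v 1 := hnonneg 1 (by norm_num)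
  -- v 2 ≥ 2 * v 1 by convexity and v 0 = 0
  have hconv2 : v 1 ≤ (v 0 + v 2) / 2 := by
    have h := hconv.2 (Set.mem_Ici.mpr (le_refl (0:ℝ))) (Set.mem_Ici.mpr (by norm_num : (0:ℝ) ≤ 2))
      (by norm_num : (0:ℝ) ≤ (1:ℝ)/2) (by norm_num : (0:ℝ) ≤ (1:ℝ)/2) (by norm_num)
    simp only [smul_eq_mul] at h
    norm_num at h
    linarith
  have hv2ge : 2 * v 1 ≤ v 2 := by rw [hv0] at hconv2; linarith
  have hv2le : v 2 ≤ 2 * v 1 + (a + ε) + b := by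
    have h := hdouble 1 le_rfl
    rw [(by norm_num : (2:ℝ) * 1 = 2)] at h
    linarith
  have hbge : -(a + ε) ≤ b := by linarith
  -- concavity of log : log 2 * (x - 1) ≤ log x for x ∈ [1,2]
  have hlogconc : ∀ x : ℝ, 1 ≤ x → x ≤ 2 → Real.log 2 * (x - 1) ≤ Real.log x := by
    intro x h1 h2
    have hcc : ConcaveOn ℝ (Set.Ioi 0) Real.log := strictConcaveOn_log_Ioi.concaveOn
    have h := hcc.2 (Set.mem_Ioi.mpr (by norm_num : (0:ℝ) < 1))
      (Set.mem_Ioi.mpr (by norm_num : (0:ℝ) < 2))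
      (by linarith : (0:ℝ) ≤ 2 - x) (by linarith : (0:ℝ) ≤ x - 1) (by ring)
    have e : (2 - x) • (1:ℝ) + (x - 1) • (2:ℝ) = x := by simp [smul_eq_mul]; ring
    rw [e] at h
    simp only [smul_eq_mul, Real.log_one, mul_zero] at h
    linarith [h]
  -- base case : x ∈ [1,2]
  have hbase : ∀ x : ℝ, 1 ≤ x → x ≤ 2 → v x ≤ g x := by
    intro x h1 h2
    have hx0 : x ∈ Set.Ici (0:ℝ) := by simp; linarith
    have hvx : v x ≤ v 2 := hmono hx0 (by norm_num : (2:ℝ) ∈ Set.Ici 0) h2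
    have hlogx : 0 ≤ Real.log x := Real.log_nonneg h1
    have hxlog : Real.log 2 * (x - 1) ≤ x * Real.log x := by
      have := hlogconc x h1 h2
      nlinarith
    -- need : 2*v 1 + (a+ε) + b ≤ g x, i.e. D * x * log x ≥ K * (1 - x)
    have key : K * (1 - x) ≤ D * (x * Real.log x) := by
      rcases le_or_gt 0 K with hKpos | hKneg
      · have : K * (1 - x) ≤ 0 := mul_nonpos_of_nonneg_of_nonpos hKpos (by linarith)
        have : 0 ≤ D * (x * Real.log x) := by positivity
        linarith
      · have hKge : -(a + ε) ≤ K := by simp only [hK]; linarith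
        have h1' : K * (1 - x) = (-K) * (x - 1) := by ring
        have h2' : (-K) * (x - 1) ≤ (a + ε) * (x - 1) := by
          apply mul_le_mul_of_nonneg_right (by linarith) (by linarith)
        have h3' : (a + ε) * (x - 1) ≤ D * (x * Real.log x) := by
          rw [hD, div_mul_eq_mul_div, le_div_iff₀ hlog2]
          calc (a + ε) * (x - 1) * Real.log 2 = (a + ε) * (Real.log 2 * (x - 1)) := by ring
            _ ≤ (a + ε) * (x * Real.log x) := by
                apply mul_le_mul_of_nonneg_left hxlog (le_of_lt hC)
        linarith
    have : v x ≤ 2 * v 1 + (a + ε) + b := le_trans hvx hv2le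
    simp only [hg]
    have : K - b = 2 * v 1 + (a + ε) + b := by rw [hK]; ring
    nlinarith [key]
  -- induction : ∀ n, ∀ x ∈ [1, 2^n], v x ≤ g x
  have hmain : ∀ n : ℕ, ∀ x : ℝ, 1 ≤ x → x ≤ 2 ^ n → v x ≤ g x := by
    intro n
    induction n with
    | zero => intro x h1 h2; exact hbase x h1 (by norm_num at h2; linarith)
    | succ n ih =>
      intro x h1 h2
      rcases le_or_gt x 2 with hx2 | hx2
      · exact hbase x h1 hx2
      · have hy1 : 1 ≤ x / 2 := by linarith
        have hy2 : x / 2 ≤ 2 ^ n := by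
          rw [div_le_iff₀ (by norm_num : (0:ℝ) < 2)]
          calc x ≤ 2 ^ (n + 1) := h2
            _ = 2 ^ n * 2 := by ring
        have hvy := ih (x / 2) hy1 hy2
        have hd := hdouble (x / 2) hy1
        have hxe : 2 * (x / 2) = x := by ring
        rw [hxe] at hd
        have hypos : 0 < x / 2 := by linarith
        have hlogsplit : Real.log x = Real.log 2 + Real.log (x / 2) := by
          rw [← Real.log_mul (by norm_num) (ne_of_gt hypos), hxe]
        have hDlog : D * Real.log 2 = a + ε := by
          rw [hD]; field_simp
        -- g x = 2 * g (x/2) + (a+ε)*(x/2) + b + (a+ε)*(x/2)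
        have hgx : g x = 2 * g (x / 2) + (a + ε) * (x / 2) + b + (a + ε) * (x / 2) := by
          simp only [hg, hlogsplit]
          have : D * x * (Real.log 2 + Real.log (x / 2))
              = (D * Real.log 2) * x + D * x * Real.log (x / 2) := by ring
          rw [this, hDlog]
          ring
        have hCx : 0 < (a + ε) * (x / 2) := mul_pos hC hypos
        calc v x ≤ 2 * v (x / 2) + (a + ε) * (x / 2) + b := hd
          _ ≤ 2 * g (x / 2) + (a + ε) * (x / 2) + b := by linarith
          _ ≤ g x := by rw [hgx]; linarith
  intro x hx
  obtain ⟨n, hn⟩ := pow_unbounded_of_one_lt x (by norm_num : (1:ℝ) < 2)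
  exact hmain n x hx (le_of_lt hn)
end

section
/- Let v belong to the class 𝓥 and define h_v(s) = liminf_{x→+∞}(v(x)/x − v(sx)/(sx)) for s > 0. Then for every s ∈ (0,+∞), h_v(s) is finite: −∞ < h_v(s) < +∞. -/
open Filter

/-- The class 𝓥 of nonnegative convex increasing functions on [0,∞) with v(0)=0
satisfying conditions (V1), (V2), (V3). -/
def ClassV (v : ℝ → ℝ) : Prop :=
  (∀ x ∈ Set.Ici (0 : ℝ), 0 ≤ v x) ∧ ConvexOn ℝ (Set.Ici 0) v ∧
  MonotoneOn v (Set.Ici 0) ∧ v 0 = 0 ∧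
  (∃ A B : ℝ, ∀ x : ℝ, 1 ≤ x → x * Real.log x + A * x + B ≤ v x) ∧
  (∀ s : ℝ, 1 < s → ∃ η : ℝ, 0 < η ∧ ∃ m : ℝ,
    ∀ x : ℝ, 0 ≤ x → s * v x + η * x + m ≤ v (s * x)) ∧
  (∀ ε : ℝ, 0 < ε → ∃ a : ℝ, 0 < a ∧ ∃ b : ℝ,
    ∀ y : ℝ, 1 ≤ y → ∀ x : ℝ, 1 ≤ x → v (x + y) - v x - ε * x ≤ v y + a * y + b)

theorem stmt_13 (v : ℝ → ℝ) (hv : ClassV v) (s : ℝ) (hs : 0 < s) :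
    ⊥ < Filter.liminf (fun x : ℝ => ((v x / x - v (s * x) / (s * x) : ℝ) : EReal)) Filter.atTop ∧
    Filter.liminf (fun x : ℝ => ((v x / x - v (s * x) / (s * x) : ℝ) : EReal)) Filter.atTop < ⊤ := by
  obtain ⟨hnn, hconv, hmono, h0, hV1, hV2, hV3⟩ := hv
  obtain ⟨a, ha, b, hab⟩ := hV3 1 one_pos
  -- monotonicity of g(x) = v x / x
  have hg : ∀ x y : ℝ, 0 < x → x ≤ y → v x / x ≤ v y / y := by
    intro x y hx hxy
    have hy : 0 < y := lt_of_lt_of_le hx hxy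
    have hxy' : x / y ≤ 1 := (div_le_one hy).2 hxy
    have hxy0 : 0 ≤ x / y := le_of_lt (div_pos hx hy)
    have := hconv.2 (Set.mem_Ici.2 (le_refl (0:ℝ)))
      (Set.mem_Ici.2 hy.le)
      (show (0:ℝ) ≤ 1 - x / y by linarith) hxy0 (by ring)
    simp only [smul_eq_mul, mul_zero, zero_add, h0, mul_zero] at this
    have hvx : v x ≤ x / y * v y := by
      have hxx : x / y * y = x := div_mul_cancel₀ x hy.ne'
      rw [hxx] at this; linarith
    rw [div_le_div_iff₀ hx hy]
    have h3 : v x * y ≤ (x / y * v y) * y := by nlinarith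
    have h4 : (x / y * v y) * y = v y * x := by field_simp
    linarith
  -- doubling bound
  set K : ℝ := (1 + a + |b|) / 2 with hKdef
  have hK : ∀ x : ℝ, 1 ≤ x → v (2 * x) / (2 * x) ≤ v x / x + K := by
    intro x hx
    have hx0 : 0 < x := lt_of_lt_of_le one_pos hx
    have h1 := hab x hx x hx
    have hb : b ≤ |b| * x := by
      calc b ≤ |b| := le_abs_self b
        _ = |b| * 1 := (mul_one _).symm
        _ ≤ |b| * x := by nlinarith [abs_nonneg b]
    have h2 : v (2 * x) ≤ 2 * v x + 2 * K * x := by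
      have hxx : x + x = 2 * x := by ring
      rw [hxx] at h1; rw [hKdef]; nlinarith
    rw [div_add' _ _ _ hx0.ne', div_le_div_iff₀ (by linarith) hx0]
    nlinarith [mul_le_mul_of_nonneg_right h2 hx0.le]
  -- iterated doubling
  have hKn : ∀ n : ℕ, ∀ x : ℝ, 1 ≤ x → v (2 ^ n * x) / (2 ^ n * x) ≤ v x / x + n * K := by
    intro n
    induction n with
    | zero => intro x hx; simp
    | succ n ih =>
      intro x hx
      have hx0 : 0 < x := lt_of_lt_of_le one_pos hx
      have h2n : (1:ℝ) ≤ 2 ^ n := one_le_pow₀ (by norm_num)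
      have h2nx : 1 ≤ 2 ^ n * x := by nlinarith
      have := hK (2 ^ n * x) h2nx
      have heq : 2 * (2 ^ n * x) = 2 ^ (n + 1) * x := by ring
      rw [heq] at this
      calc v (2 ^ (n+1) * x) / (2 ^ (n+1) * x) ≤ v (2 ^ n * x) / (2 ^ n * x) + K := this
        _ ≤ v x / x + n * K + K := by linarith [ih x hx]
        _ = v x / x + (n + 1 : ℕ) * K := by push_cast; ring
  obtain ⟨n, hn⟩ := pow_unbounded_of_one_lt (max s s⁻¹) (one_lt_two (α := ℝ))
  have hsn : s ≤ 2 ^ n := le_of_lt (lt_of_le_of_lt (le_max_left _ _) hn)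
  have hsn' : s⁻¹ ≤ 2 ^ n := le_of_lt (lt_of_le_of_lt (le_max_right _ _) hn)
  have hK0 : 0 ≤ K := by
    have := abs_nonneg b; rw [hKdef]; linarith
  -- two-sided bound, eventually
  have hbound : ∀ x : ℝ, max 1 s⁻¹ ≤ x →
      -(n * K) ≤ v x / x - v (s * x) / (s * x) ∧ v x / x - v (s * x) / (s * x) ≤ n * K := by
    intro x hx
    have hx1 : 1 ≤ x := le_trans (le_max_left _ _) hx
    have hx0 : 0 < x := lt_of_lt_of_le one_pos hx1
    have hsx0 : 0 < s * x := mul_pos hs hx0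
    have hsx1 : 1 ≤ s * x := by
      have : s⁻¹ ≤ x := le_trans (le_max_right _ _) hx
      calc (1:ℝ) = s * s⁻¹ := (mul_inv_cancel₀ hs.ne').symm
        _ ≤ s * x := by nlinarith
    constructor
    · -- v(sx)/(sx) ≤ v x / x + nK
      have h1 : v (s * x) / (s * x) ≤ v (2 ^ n * x) / (2 ^ n * x) :=
        hg _ _ hsx0 (by nlinarith)
      have h2 := hKn n x hx1
      linarith
    · -- v x / x ≤ v (sx)/(sx) + nK
      have h1 : v x / x ≤ v (2 ^ n * (s * x)) / (2 ^ n * (s * x)) := by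
        apply hg _ _ hx0
        have : 1 ≤ 2 ^ n * s := by
          calc (1:ℝ) = s⁻¹ * s := (inv_mul_cancel₀ hs.ne').symm
            _ ≤ 2 ^ n * s := by nlinarith
        nlinarith
      have h2 := hKn n (s * x) hsx1
      linarith
  have hev : ∀ᶠ x : ℝ in atTop, max 1 s⁻¹ ≤ x := eventually_ge_atTop _
  have hlo : ∀ᶠ x : ℝ in atTop,
      ((-(n * K) : ℝ) : EReal) ≤ ((v x / x - v (s * x) / (s * x) : ℝ) : EReal) :=
    hev.mono fun x hx => EReal.coe_le_coe_iff.2 (hbound x hx).1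
  have hhi : ∀ᶠ x : ℝ in atTop,
      ((v x / x - v (s * x) / (s * x) : ℝ) : EReal) ≤ ((n * K : ℝ) : EReal) :=
    hev.mono fun x hx => EReal.coe_le_coe_iff.2 (hbound x hx).2
  constructor
  · exact lt_of_lt_of_le (EReal.bot_lt_coe _) (le_liminf_of_le (h := hlo))
  · exact lt_of_le_of_lt (le_trans liminf_le_limsup (limsup_le_of_le (h := hhi))) (EReal.coe_lt_top _)
end

section
/- Let v belong to the class 𝓥 and define h_v(s) = liminf_{x→+∞}(v(x)/x − v(sx)/(sx)) for s > 0. Then h_v(s) > 0 for every s ∈ (0,1) and h_v(s) < 0 for every s > 1. -/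
open Filter

/-- The function h_v(s) = liminf_{x→+∞} (v(x)/x − v(sx)/(sx)). -/
noncomputable def hFun (v : ℝ → ℝ) (s : ℝ) : ℝ :=
  Filter.liminf (fun x : ℝ => v x / x - v (s * x) / (s * x)) Filter.atTop

/-- Sublinearity from convexity and v(0)=0: v(t x) ≤ t v x for t ∈ [0,1], x ≥ 0. -/
lemma classV_sub (v : ℝ → ℝ) (hv : ClassV v) {t x : ℝ} (ht0 : 0 ≤ t) (ht1 : t ≤ 1)
    (hx : 0 ≤ x) : v (t * x) ≤ t * v x := by
  obtain ⟨_, hconv, _, hv0, _⟩ := hv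
  have h := hconv.2 (Set.mem_Ici.mpr hx) (Set.mem_Ici.mpr le_rfl) ht0
    (by linarith : (0:ℝ) ≤ 1 - t) (by ring)
  simp only [smul_eq_mul, mul_zero, add_zero, hv0] at h
  linarith

/-- Key estimate from (V3): for r > 1 there exist c, d, x₀ with
v(r x) ≤ r v(x) + c x + d for all x ≥ x₀. -/
lemma classV_key (v : ℝ → ℝ) (hv : ClassV v) (r : ℝ) (hr : 1 < r) :
    ∃ c d x₀ : ℝ, 1 ≤ x₀ ∧ ∀ x : ℝ, x₀ ≤ x → v (r * x) ≤ r * v x + c * x + d := by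
  obtain ⟨a, ha, b, hV3⟩ := hv.2.2.2.2.2.2 1 one_pos
  have main : ∀ n : ℕ, ∀ r : ℝ, 1 < r → r ≤ 2 ^ n →
      ∃ c d x₀ : ℝ, 1 ≤ x₀ ∧ ∀ x : ℝ, x₀ ≤ x → v (r * x) ≤ r * v x + c * x + d := by
    intro n
    induction n with
    | zero => intro r h1 h2; simp at h2; linarith
    | succ n ih =>
      intro r h1 h2
      by_cases hr2 : r ≤ 2
      · -- base case: r ∈ (1, 2]
        refine ⟨1 + a * (r - 1), b, max 1 ((r - 1)⁻¹), le_max_left _ _, ?_⟩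
        intro x hx
        have hx1 : 1 ≤ x := le_trans (le_max_left _ _) hx
        have hrx : 1 ≤ (r - 1) * x := by
          have h0 : 0 < r - 1 := by linarith
          have h1x := le_trans (le_max_right 1 ((r-1)⁻¹)) hx
          calc (1:ℝ) = (r - 1) * (r - 1)⁻¹ := (mul_inv_cancel₀ (ne_of_gt h0)).symm
          _ ≤ (r - 1) * x := mul_le_mul_of_nonneg_left h1x (le_of_lt h0)
        have h3 := hV3 ((r - 1) * x) hrx x hx1
        have hsub : v ((r - 1) * x) ≤ (r - 1) * v x :=
          classV_sub v hv (by linarith) (by linarith) (by linarith)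
        have heq : x + (r - 1) * x = r * x := by ring
        rw [heq] at h3
        nlinarith
      · -- inductive case: r > 2
        push_neg at hr2
        have h1' : 1 < r / 2 := by linarith
        have h2' : r / 2 ≤ 2 ^ n := by
          rw [pow_succ] at h2; linarith
        obtain ⟨c, d, x₀, hx₀, hkey⟩ := ih (r / 2) h1' h2'
        refine ⟨2 * c + (1 + a) * (r / 2), 2 * d + b, x₀, hx₀, ?_⟩
        intro x hx
        have hx1 : 1 ≤ x := le_trans hx₀ hx
        have hy1 : 1 ≤ r / 2 * x := by nlinarith
        have h3 := hV3 (r / 2 * x) hy1 (r / 2 * x) hy1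
        have heq : r / 2 * x + r / 2 * x = r * x := by ring
        rw [heq] at h3
        have h4 := hkey x hx
        nlinarith
  obtain ⟨n, hn⟩ := pow_unbounded_of_one_lt r (by norm_num : (1:ℝ) < 2)
  exact main n r hr (le_of_lt hn)

theorem stmt_14 (v : ℝ → ℝ) (hv : ClassV v) :
    (∀ s : ℝ, s ∈ Set.Ioo (0 : ℝ) 1 → 0 < hFun v s) ∧
    (∀ s : ℝ, 1 < s → hFun v s < 0) := by
  constructor
  · -- case 0 < s < 1
    intro s hs
    obtain ⟨hs0, hs1⟩ := hs
    set t := s⁻¹ with ht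
    have ht1 : 1 < t := (one_lt_inv₀ hs0).mpr hs1
    -- lower bound from (V2)
    obtain ⟨η, hη, m, hV2⟩ := hv.2.2.2.2.2.1 t ht1
    -- upper bound from key lemma applied with r = t at point s x
    obtain ⟨c, d, x₀, hx₀, hkey⟩ := classV_key v hv t ht1
    -- eventual upper bound for f
    have hub : ∀ᶠ x in atTop, v x / x - v (s * x) / (s * x) ≤ c * s + |d| := by
      filter_upwards [eventually_ge_atTop (max (x₀ / s) 1)] with x hx
      have hx1 : 1 ≤ x := le_trans (le_max_right _ _) hx
      have hxpos : 0 < x := by linarith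
      have hsxpos : 0 < s * x := by positivity
      have hsx : x₀ ≤ s * x := by
        have h1 := le_trans (le_max_left (x₀/s) 1) hx
        calc x₀ = s * (x₀ / s) := by field_simp
        _ ≤ s * x := by nlinarith
      have h := hkey (s * x) hsx
      have hts : t * (s * x) = x := by rw [ht]; field_simp
      rw [hts] at h
      -- v x ≤ t * v (s x) + c * (s x) + d
      rw [div_sub_div _ _ (ne_of_gt hxpos) (ne_of_gt hsxpos), div_le_iff₀ (by positivity)]
      have hd : d ≤ |d| := le_abs_self d
      have hmul : v x * (s * x) ≤ (t * v (s * x) + c * (s * x) + d) * (s * x) :=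
        mul_le_mul_of_nonneg_right h (le_of_lt hsxpos)
      have h2 : t * v (s * x) * (s * x) = x * v (s * x) := by
        calc t * v (s * x) * (s * x) = v (s * x) * (t * (s * x)) := by ring
        _ = x * v (s * x) := by rw [hts]; ring
      have hexp : (t * v (s * x) + c * (s * x) + d) * (s * x)
          = x * v (s * x) + c * (s * x) * (s * x) + d * (s * x) := by
        rw [add_mul, add_mul, h2]
      have h3 : d * (s * x) ≤ |d| * (s * x) :=
        mul_le_mul_of_nonneg_right hd (le_of_lt hsxpos)
      have h4 : |d| * (s * x) ≤ |d| * (s * x) * x := by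
        nlinarith [mul_nonneg (abs_nonneg d) (le_of_lt hsxpos)]
      have hgoal : c * (s * x) * (s * x) + d * (s * x) ≤ (c * s + |d|) * (x * (s * x)) := by
        nlinarith
      linarith
    -- eventual lower bound
    have hlb : ∀ᶠ x in atTop, η * s / 2 ≤ v x / x - v (s * x) / (s * x) := by
      filter_upwards [eventually_ge_atTop (max 1 (2 * |m| / (η * s)))] with x hx
      have hx1 : 1 ≤ x := le_trans (le_max_left _ _) hx
      have hxpos : 0 < x := by linarith
      have hsxpos : 0 < s * x := by positivity
      have h := hV2 (s * x) (le_of_lt hsxpos)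
      have hts : t * (s * x) = x := by rw [ht]; field_simp
      rw [hts] at h
      -- t * v(s x) + η * (s x) + m ≤ v x
      have hm : -|m| ≤ m := neg_abs_le m
      have hxm : 2 * |m| / (η * s) ≤ x := le_trans (le_max_right _ _) hx
      have hηs : 0 < η * s := by positivity
      have hxm' : 2 * |m| ≤ η * s * x := by
        rw [div_le_iff₀ hηs] at hxm; nlinarith
      rw [div_sub_div _ _ (ne_of_gt hxpos) (ne_of_gt hsxpos), le_div_iff₀ (by positivity)]
      -- goal: η*s/2 * (x * (s*x)) ≤ v x * (s*x) - x * v (s*x)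
      have hmul : (t * v (s * x) + η * (s * x) + m) * (s * x) ≤ v x * (s * x) :=
        mul_le_mul_of_nonneg_right h (le_of_lt hsxpos)
      have h2 : t * v (s * x) * (s * x) = x * v (s * x) := by
        calc t * v (s * x) * (s * x) = v (s * x) * (t * (s * x)) := by ring
        _ = x * v (s * x) := by rw [hts]; ring
      have hexp : (t * v (s * x) + η * (s * x) + m) * (s * x)
          = x * v (s * x) + η * (s * x) * (s * x) + m * (s * x) := by
        rw [add_mul, add_mul, h2]
      have h3 : -|m| * (s * x) ≤ m * (s * x) :=
        mul_le_mul_of_nonneg_right hm (le_of_lt hsxpos)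
      nlinarith [mul_le_mul_of_nonneg_right hxm' (le_of_lt hsxpos)]
    have hcb : IsCoboundedUnder (· ≥ ·) atTop (fun x : ℝ => v x / x - v (s * x) / (s * x)) :=
      (isBoundedUnder_of_eventually_le hub).isCoboundedUnder_ge
    have := le_liminf_of_le hcb hlb
    calc (0:ℝ) < η * s / 2 := by positivity
    _ ≤ hFun v s := this
  · -- case s > 1
    intro s hs
    have hs0 : 0 < s := by linarith
    obtain ⟨η, hη, m, hV2⟩ := hv.2.2.2.2.2.1 s hs
    obtain ⟨c, d, x₀, hx₀, hkey⟩ := classV_key v hv s hs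
    -- eventual upper bound
    have hub : ∀ᶠ x in atTop, v x / x - v (s * x) / (s * x) ≤ -(η / (2 * s)) := by
      filter_upwards [eventually_ge_atTop (max 1 (2 * |m| / η))] with x hx
      have hx1 : 1 ≤ x := le_trans (le_max_left _ _) hx
      have hxpos : 0 < x := by linarith
      have hsxpos : 0 < s * x := by positivity
      have h := hV2 x (le_of_lt hxpos)
      have hm : -|m| ≤ m := neg_abs_le m
      have hxm : 2 * |m| / η ≤ x := le_trans (le_max_right _ _) hx
      have hxm' : 2 * |m| ≤ η * x := by
        rw [div_le_iff₀ hη] at hxm; nlinarith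
      rw [div_sub_div _ _ (ne_of_gt hxpos) (ne_of_gt hsxpos), div_le_iff₀ (by positivity)]
      -- goal: v x * (s*x) - x * v (s*x) ≤ -(η/(2*s)) * (x * (s*x))
      have hmul : (s * v x + η * x + m) * x ≤ v (s * x) * x :=
        mul_le_mul_of_nonneg_right h (le_of_lt hxpos)
      have hrhs : -(η / (2 * s)) * (x * (s * x)) = -(η / 2) * (x * x) := by
        field_simp
      rw [hrhs]
      nlinarith [mul_le_mul_of_nonneg_right hxm' (le_of_lt hxpos)]
    -- eventual lower bound
    have hlb : ∀ᶠ x in atTop, -(c / s) - |d| ≤ v x / x - v (s * x) / (s * x) := by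
      filter_upwards [eventually_ge_atTop x₀] with x hx
      have hx1 : 1 ≤ x := le_trans hx₀ hx
      have hxpos : 0 < x := by linarith
      have hsxpos : 0 < s * x := by positivity
      have h := hkey x hx
      have hd : d ≤ |d| := le_abs_self d
      rw [div_sub_div _ _ (ne_of_gt hxpos) (ne_of_gt hsxpos), le_div_iff₀ (by positivity)]
      -- goal: (-(c/s) - |d|) * (x * (s*x)) ≤ v x * (s*x) - x * v (s*x)
      have hmul : x * v (s * x) ≤ (s * v x + c * x + d) * x := by
        rw [mul_comm]; exact mul_le_mul_of_nonneg_right h (le_of_lt hxpos)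
      have hrhs : (-(c / s) - |d|) * (x * (s * x)) = -c * (x * x) - |d| * s * (x * x) := by
        field_simp
      rw [hrhs]
      have h3 : d * x ≤ |d| * x := mul_le_mul_of_nonneg_right hd (le_of_lt hxpos)
      have h5 : (0:ℝ) ≤ s * x - 1 := by nlinarith
      have h4 : |d| * x ≤ |d| * s * (x * x) := by
        nlinarith [mul_nonneg (mul_nonneg (abs_nonneg d) (le_of_lt hxpos)) h5]
      nlinarith
    have hbd : IsBoundedUnder (· ≥ ·) atTop (fun x : ℝ => v x / x - v (s * x) / (s * x)) :=
      isBoundedUnder_of_eventually_ge hlb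
    have hle : hFun v s ≤ -(η / (2 * s)) := by
      refine liminf_le_of_le hbd ?_
      intro b hb
      obtain ⟨x, hb1, hb2⟩ := (hb.and hub).exists
      linarith
    have : 0 < η / (2 * s) := by positivity
    linarith
end

section
/- Let v belong to the class 𝓥 and define h_v(s) = liminf_{x→+∞}(v(x)/x − v(sx)/(sx)) for s > 0. Then lim_{s→0⁺} h_v(s) = +∞. -/
open Filter

theorem stmt_16 (v : ℝ → ℝ) (hv : ClassV v) :
    Tendsto (hFun v) (nhdsWithin 0 (Set.Ioi 0)) atTop := by
  obtain ⟨hnn, hconv, hmono, h0, hV1, hV2, hV3⟩ := hv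
  obtain ⟨η, hη, m, hm⟩ := hV2 2 one_lt_two
  obtain ⟨a, ha, b, hb⟩ := hV3 1 one_pos
  -- slope monotonicity: v p / p ≤ v q / q for 0 < p ≤ q
  have slope : ∀ p q : ℝ, 0 < p → p ≤ q → v p / p ≤ v q / q := by
    intro p q hp hpq
    have hq : (0:ℝ) < q := lt_of_lt_of_le hp hpq
    have key := hconv.2 (Set.mem_Ici.2 hq.le) (Set.mem_Ici.2 (le_refl (0:ℝ)))
      (div_nonneg hp.le hq.le) (sub_nonneg.2 ((div_le_one hq).2 hpq)) (by ring)
    simp only [smul_eq_mul, mul_zero, add_zero, h0] at key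
    rw [div_mul_cancel₀ p hq.ne'] at key
    -- key : v p ≤ p / q * v q
    rw [div_le_div_iff₀ hp hq]
    have e : p / q * v q * q = v q * p := by field_simp
    have := mul_le_mul_of_nonneg_right key hq.le
    linarith [e ▸ this]
  -- lower doubling step
  have gstep : ∀ y : ℝ, 0 < y → v y / y + η / 2 + m / (2 * y) ≤ v (2 * y) / (2 * y) := by
    intro y hy
    have h1 := hm y hy.le
    have h2 : (2 * v y + η * y + m) / (2 * y) ≤ v (2 * y) / (2 * y) := by gcongr
    have e : (2 * v y + η * y + m) / (2 * y) = v y / y + η / 2 + m / (2 * y) := by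
      field_simp
    linarith [e ▸ h2]
  -- iterated lower bound
  have low : ∀ k : ℕ, ∀ x : ℝ, 0 < x →
      v (x / 2 ^ k) / (x / 2 ^ k) + (k : ℝ) * (η / 2) + (2 ^ k - 1) * m / x ≤ v x / x := by
    intro k
    induction k with
    | zero => intro x hx; simp
    | succ k ih =>
      intro x hx
      have hxk : (0:ℝ) < x / 2 ^ (k + 1) := by positivity
      have h1 := gstep (x / 2 ^ (k + 1)) hxk
      have e2 : 2 * (x / 2 ^ (k + 1)) = x / 2 ^ k := by ring
      rw [e2] at h1
      have e3 : m / (x / 2 ^ k) = m * 2 ^ k / x := div_div_eq_mul_div m x (2 ^ k)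
      rw [e3] at h1
      have h2 := ih x hx
      have e4 : ((2:ℝ) ^ (k + 1) - 1) * m / x = (2 ^ k - 1) * m / x + m * 2 ^ k / x := by
        ring
      push_cast
      linarith [h1, h2, e4.le, e4.ge]
  -- upper doubling step
  have ustep : ∀ y : ℝ, 1 ≤ y → v (2 * y) / (2 * y) ≤ v y / y + (1 + a) / 2 + b / (2 * y) := by
    intro y hy
    have hy0 : (0:ℝ) < y := lt_of_lt_of_le one_pos hy
    have h1 := hb y hy y hy
    have e : y + y = 2 * y := by ring
    rw [e] at h1
    have h2 : v (2 * y) / (2 * y) ≤ (2 * v y + (1 + a) * y + b) / (2 * y) := by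
      gcongr
      linarith
    have e2 : (2 * v y + (1 + a) * y + b) / (2 * y) = v y / y + (1 + a) / 2 + b / (2 * y) := by
      field_simp
    linarith [e2 ▸ h2]
  -- iterated upper bound
  have up : ∀ k : ℕ, ∀ x : ℝ, (2:ℝ) ^ k ≤ x →
      v x / x ≤ v (x / 2 ^ k) / (x / 2 ^ k) + (k : ℝ) * ((1 + a) / 2) + (2 ^ k - 1) * b / x := by
    intro k
    induction k with
    | zero => intro x hx; simp
    | succ k ih =>
      intro x hx
      have h2k : (0:ℝ) < 2 ^ k := by positivity
      have hx0 : (0:ℝ) < x := lt_of_lt_of_le (by positivity) hx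
      have hxk1 : (1:ℝ) ≤ x / 2 ^ (k + 1) := by
        rw [le_div_iff₀ (by positivity)]
        simpa using hx
      have h1 := ustep (x / 2 ^ (k + 1)) hxk1
      have e2 : 2 * (x / 2 ^ (k + 1)) = x / 2 ^ k := by ring
      rw [e2] at h1
      have e3 : b / (x / 2 ^ k) = b * 2 ^ k / x := div_div_eq_mul_div b x (2 ^ k)
      rw [e3] at h1
      have h3 := ih x (le_trans (by rw [pow_succ]; linarith) hx)
      have e4 : ((2:ℝ) ^ (k + 1) - 1) * b / x = (2 ^ k - 1) * b / x + b * 2 ^ k / x := by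
        ring
      push_cast
      linarith [h1, h3, e4.le, e4.ge]
  rw [tendsto_atTop]
  intro M
  obtain ⟨k, hk⟩ := exists_nat_ge ((M + 1) * 2 / η)
  have hkη : M + 1 ≤ (k : ℝ) * (η / 2) := by
    have := (div_le_iff₀ hη).1 hk
    linarith
  have h2k : (1:ℝ) ≤ 2 ^ k := one_le_pow₀ (by norm_num)
  filter_upwards [Ioo_mem_nhdsGT_of_mem
    (Set.mem_Ico.2 ⟨le_refl (0:ℝ), by positivity⟩ : (0:ℝ) ∈ Set.Ico 0 (((2:ℝ) ^ k)⁻¹))]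
    with s hs
  obtain ⟨hs0, hsk⟩ := hs
  show M ≤ hFun v s
  unfold hFun
  apply Filter.le_liminf_of_le
  · -- coboundedness: the function is eventually bounded above
    obtain ⟨j, hj⟩ := pow_unbounded_of_one_lt (1 / s) (one_lt_two (α := ℝ))
    have hsj : ((2:ℝ) ^ j)⁻¹ < s := by
      rw [inv_lt_comm₀ (by positivity) hs0]
      simpa [one_div] using hj
    apply Filter.IsBoundedUnder.isCoboundedUnder_ge
    refine ⟨(j : ℝ) * ((1 + a) / 2) + |b|, eventually_map.2 ?_⟩
    filter_upwards [eventually_ge_atTop ((2:ℝ) ^ j)] with x hx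
    have hx0 : (0:ℝ) < x := lt_of_lt_of_le (by positivity) hx
    have h5 : (1:ℝ) < s * 2 ^ j := by
      have := mul_lt_mul_of_pos_right hsj (pow_pos (by norm_num : (0:ℝ) < 2) j)
      rwa [inv_mul_cancel₀ (by positivity)] at this
    have hle : x / 2 ^ j ≤ s * x := by
      rw [div_le_iff₀ (by positivity)]
      nlinarith [mul_pos (sub_pos.2 h5) hx0]
    have hsl := slope (x / 2 ^ j) (s * x) (by positivity) hle
    have hup := up j x hx
    have hbb : (2 ^ j - 1) * b / x ≤ |b| := by
      rw [div_le_iff₀ hx0]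
      have h1j : (1:ℝ) ≤ 2 ^ j := one_le_pow₀ (by norm_num)
      nlinarith [le_abs_self b, neg_abs_le b, abs_nonneg b]
    linarith
  · -- eventual lower bound
    filter_upwards [eventually_ge_atTop (max 1 ((2:ℝ) ^ k * (|m| + 1)))] with x hx
    have hx1 : (1:ℝ) ≤ x := le_trans (le_max_left _ _) hx
    have hxm : (2:ℝ) ^ k * (|m| + 1) ≤ x := le_trans (le_max_right _ _) hx
    have hx0 : (0:ℝ) < x := lt_of_lt_of_le one_pos hx1
    have h5 : s * 2 ^ k < 1 := by
      have := mul_lt_mul_of_pos_right hsk (pow_pos (by norm_num : (0:ℝ) < 2) k)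
      rwa [inv_mul_cancel₀ (by positivity)] at this
    have hle : s * x ≤ x / 2 ^ k := by
      rw [le_div_iff₀ (by positivity)]
      nlinarith [mul_pos (sub_pos.2 h5) hx0]
    have hsl := slope (s * x) (x / 2 ^ k) (by positivity) hle
    have hlow := low k x hx0
    have hmm : -1 ≤ (2 ^ k - 1) * m / x := by
      rw [le_div_iff₀ hx0]
      nlinarith [neg_abs_le m, le_abs_self m, abs_nonneg m]
    linarith
end

section
/- Let v belong to the class 𝓥 and define h_v(s) = liminf_{x→+∞}(v(x)/x − v(sx)/(sx)) for s > 0. Then h_v(1) = 0 and h_v is continuous at s = 1, i.e. lim_{s→1} h_v(s) = 0; moreover, for every s > 0, h_v(s) + h_v(1/s) ≤ 0. -/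
open Filter

-- scaling: v (t*z) ≤ t * v z for t ∈ [0,1], z ≥ 0
lemma classV_scale {v : ℝ → ℝ} (hv : ClassV v) {t z : ℝ} (ht0 : 0 ≤ t) (ht1 : t ≤ 1)
    (hz : 0 ≤ z) : v (t * z) ≤ t * v z := by
  have hc := hv.2.1.2 (Set.mem_Ici.2 hz) (Set.mem_Ici.2 (le_refl (0:ℝ))) ht0
      (by linarith : 0 ≤ 1 - t) (by ring)
  simp only [smul_eq_mul, mul_zero, add_zero] at hc
  rw [hv.2.2.2.1] at hc
  linarith

-- slope monotone
lemma classV_slope {v : ℝ → ℝ} (hv : ClassV v) {x y : ℝ} (hx : 0 < x) (hxy : x ≤ y) :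
    v x / x ≤ v y / y := by
  have hy : 0 < y := lt_of_lt_of_le hx hxy
  have ht : x / y ≤ 1 := by rw [div_le_one hy]; exact hxy
  have := classV_scale hv (le_of_lt (div_pos hx hy)) ht hy.le
  rw [div_mul_cancel₀ _ hy.ne'] at this
  rw [div_le_div_iff₀ hx hy]
  calc v x * y ≤ (x / y * v y) * y := by nlinarith
    _ = v y * x := by field_simp

-- key estimate
lemma classV_key_s17 {v : ℝ → ℝ} (hv : ClassV v) {ε a b : ℝ}
    (hab : ∀ y : ℝ, 1 ≤ y → ∀ x : ℝ, 1 ≤ x → v (x + y) - v x - ε * x ≤ v y + a * y + b)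
    {s x : ℝ} (hs : 1 < s) (hx : 1 ≤ x) (hsx : 1 ≤ (s - 1) * x) :
    v (s * x) / (s * x) - v x / x ≤ ε + a * (s - 1) + b / x := by
  have hx0 : (0:ℝ) < x := lt_of_lt_of_le one_pos hx
  have hs0 : (0:ℝ) < s := lt_trans one_pos hs
  have h1 := hab ((s - 1) * x) hsx x hx
  have h2 : v ((s-1)/s * (s * x)) ≤ (s-1)/s * v (s * x) :=
    classV_scale hv (div_nonneg (by linarith) hs0.le) (by rw [div_le_one hs0]; linarith)
      (by positivity)
  have he : (s-1)/s * (s * x) = (s - 1) * x := by field_simp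
  rw [he] at h2
  have he2 : x + (s - 1) * x = s * x := by ring
  rw [he2] at h1
  -- combine: (1/s) v(sx) ≤ v x + ε x + a (s-1) x + b
  have h3 : (1/s) * v (s * x) ≤ v x + ε * x + a * ((s-1) * x) + b := by
    have : v (s*x) - (s-1)/s * v (s*x) = (1/s) * v (s*x) := by field_simp; ring
    nlinarith
  have h4 : ((1/s) * v (s * x)) / x ≤ (v x + ε * x + a * ((s-1) * x) + b) / x :=
    (div_le_div_iff_of_pos_right hx0).2 h3
  have h5 : ((1/s) * v (s * x)) / x = v (s * x) / (s * x) := by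
    field_simp
  have h6 : (v x + ε * x + a * ((s-1) * x) + b) / x
      = v x / x + ε + a * (s - 1) + b / x := by
    field_simp
  rw [h5, h6] at h4
  linarith

-- eventual bounds for s > 1
lemma ev_gt {v : ℝ → ℝ} (hv : ClassV v) {ε a b : ℝ}
    (hab : ∀ y : ℝ, 1 ≤ y → ∀ x : ℝ, 1 ≤ x → v (x + y) - v x - ε * x ≤ v y + a * y + b)
    {s : ℝ} (hs : 1 < s) :
    ∀ᶠ x : ℝ in atTop, v x / x - v (s * x) / (s * x) ≤ 0 ∧
      -(ε + a * (s - 1) + b / x) ≤ v x / x - v (s * x) / (s * x) := by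
  filter_upwards [eventually_ge_atTop (1 : ℝ), eventually_ge_atTop ((s - 1)⁻¹)]
    with x hx1 hx2
  have hx0 : (0:ℝ) < x := lt_of_lt_of_le one_pos hx1
  have h1 : v x / x ≤ v (s * x) / (s * x) :=
    classV_slope hv hx0 (by nlinarith)
  have hsx : 1 ≤ (s - 1) * x := by
    have h := mul_le_mul_of_nonneg_left hx2 (by linarith : (0:ℝ) ≤ s - 1)
    rwa [mul_inv_cancel₀ (by linarith : s - 1 ≠ 0)] at h
  have h2 := classV_key_s17 hv hab hs hx1 hsx
  constructor <;> linarith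

-- eventual bounds for 0 < s < 1
lemma ev_lt {v : ℝ → ℝ} (hv : ClassV v) {ε a b : ℝ}
    (hab : ∀ y : ℝ, 1 ≤ y → ∀ x : ℝ, 1 ≤ x → v (x + y) - v x - ε * x ≤ v y + a * y + b)
    {s : ℝ} (hs0 : 0 < s) (hs : s < 1) :
    ∀ᶠ x : ℝ in atTop, 0 ≤ v x / x - v (s * x) / (s * x) ∧
      v x / x - v (s * x) / (s * x) ≤ ε + a * (s⁻¹ - 1) + (b / s) / x := by
  filter_upwards [eventually_ge_atTop (s⁻¹), eventually_ge_atTop ((1 - s)⁻¹),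
    eventually_ge_atTop (1 : ℝ)] with x hx1 hx2 hx3
  have hx0 : (0:ℝ) < x := lt_of_lt_of_le one_pos hx3
  have hsx1 : 1 ≤ s * x := by
    have h := mul_le_mul_of_nonneg_left hx1 hs0.le
    rwa [mul_inv_cancel₀ hs0.ne'] at h
  have h1 : v (s * x) / (s * x) ≤ v x / x :=
    classV_slope hv (by positivity) (by nlinarith)
  have hs' : 1 < s⁻¹ := (one_lt_inv₀ hs0).2 hs
  have hsx2 : 1 ≤ (s⁻¹ - 1) * (s * x) := by
    have he : (s⁻¹ - 1) * (s * x) = (1 - s) * x := by field_simp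
    rw [he]
    have h := mul_le_mul_of_nonneg_left hx2 (by linarith : (0:ℝ) ≤ 1 - s)
    rwa [mul_inv_cancel₀ (by linarith : 1 - s ≠ 0)] at h
  have h2 := classV_key_s17 hv hab hs' hsx1 hsx2
  rw [inv_mul_cancel_left₀ hs0.ne'] at h2
  have he2 : b / (s * x) = (b / s) / x := by rw [div_div]
  rw [he2] at h2
  constructor <;> linarith

lemma hFun_one {v : ℝ → ℝ} : hFun v 1 = 0 := by
  unfold hFun
  simp only [one_mul, sub_self]
  exact liminf_const 0

lemma hb_ev (b c : ℝ) (hc : 0 < c) : ∀ᶠ x : ℝ in atTop, b / x ≤ c := by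
  have h : Tendsto (fun x : ℝ => b / x) atTop (nhds 0) :=
    tendsto_const_nhds.div_atTop tendsto_id
  exact h.eventually (eventually_le_nhds hc)

theorem stmt_17 (v : ℝ → ℝ) (hv : ClassV v) :
    hFun v 1 = 0 ∧
    Tendsto (hFun v) (nhdsWithin 1 (Set.Ioi 0)) (nhds 0) ∧
    (∀ s : ℝ, 0 < s → hFun v s + hFun v s⁻¹ ≤ 0) := by
  refine ⟨hFun_one, ?_, ?_⟩
  · -- continuity at 1
    rw [Metric.tendsto_nhdsWithin_nhds]
    intro ε hε
    obtain ⟨a, ha, b, hab⟩ := hv.2.2.2.2.2.2 (ε/4) (by linarith)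
    refine ⟨min (1/2) (ε/(8*(a+1))), by positivity, ?_⟩
    intro s hs hds
    rw [Real.dist_eq] at hds ⊢
    have hs0 : (0:ℝ) < s := hs
    have hδ1 := abs_lt.1 (lt_of_lt_of_le hds (min_le_left _ _))
    have hδ2 := abs_lt.1 (lt_of_lt_of_le hds (min_le_right _ _))
    have hb4 := hb_ev b (ε/4) (by linarith)
    rcases lt_trichotomy s 1 with hlt | heq | hgt
    · -- s < 1
      have hev := ev_lt hv hab hs0 hlt
      have hb4' := hb_ev (b/s) (ε/4) (by linarith)
      have hup : ∀ᶠ x : ℝ in atTop,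
          v x / x - v (s * x) / (s * x) ≤ ε/4 + a * (s⁻¹ - 1) + ε/4 := by
        filter_upwards [hev, hb4'] with x h1 h2
        linarith [h1.2]
      have hlow : ∀ᶠ x : ℝ in atTop, (0:ℝ) ≤ v x / x - v (s * x) / (s * x) :=
        hev.mono fun x h => h.1
      have h1 : hFun v s ≤ ε/4 + a * (s⁻¹ - 1) + ε/4 :=
        liminf_le_of_le ⟨0, hlow⟩ (fun c hc => by
          obtain ⟨x, hx1, hx2⟩ := (hc.and hup).exists; linarith)
      have h2 : (0:ℝ) ≤ hFun v s :=
        le_liminf_of_le (IsBoundedUnder.isCoboundedUnder_ge ⟨_, hup⟩) hlow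
      have key0 : a * (ε / (8 * (a + 1))) ≤ ε / 8 := by
        rw [← mul_div_assoc, div_le_div_iff₀ (by positivity) (by norm_num : (0:ℝ) < 8)]
        nlinarith
      have hkey : a * (s⁻¹ - 1) < ε/4 := by
        have hs2 : 1/2 < s := by linarith
        have hinv : s⁻¹ - 1 < 2 * (1 - s) := by
          rw [sub_lt_iff_lt_add, inv_lt_iff_one_lt_mul₀ hs0]
          nlinarith
        have h3 : 1 - s < ε/(8*(a+1)) := by linarith
        nlinarith [mul_lt_mul_of_pos_left hinv ha, mul_lt_mul_of_pos_left h3 ha, key0]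
      rw [sub_zero, abs_lt]
      constructor <;> nlinarith
    · subst heq; rw [hFun_one, sub_zero, abs_zero]; exact hε
    · -- 1 < s
      have hev := ev_gt hv hab hgt
      have hlow : ∀ᶠ x : ℝ in atTop,
          -(ε/4 + a * (s - 1) + ε/4) ≤ v x / x - v (s * x) / (s * x) := by
        filter_upwards [hev, hb4] with x h1 h2
        have := h1.2; linarith
      have hup : ∀ᶠ x : ℝ in atTop, v x / x - v (s * x) / (s * x) ≤ 0 :=
        hev.mono fun x h => h.1
      have h1 : hFun v s ≤ 0 :=
        liminf_le_of_le ⟨_, hlow⟩ (fun c hc => by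
          obtain ⟨x, hx1, hx2⟩ := (hc.and hup).exists; linarith)
      have h2 : -(ε/4 + a * (s - 1) + ε/4) ≤ hFun v s :=
        le_liminf_of_le (IsBoundedUnder.isCoboundedUnder_ge ⟨0, hup⟩) hlow
      have key0 : a * (ε / (8 * (a + 1))) ≤ ε / 8 := by
        rw [← mul_div_assoc, div_le_div_iff₀ (by positivity) (by norm_num : (0:ℝ) < 8)]
        nlinarith
      have hkey : a * (s - 1) < ε/4 := by
        nlinarith [mul_lt_mul_of_pos_left hδ2.2 ha, key0]
      rw [sub_zero, abs_lt]
      constructor <;> nlinarith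
  · -- part 3
    intro s hs
    rcases eq_or_ne s 1 with rfl | hne
    · rw [inv_one, hFun_one]; norm_num
    obtain ⟨a, ha, b, hab⟩ := hv.2.2.2.2.2.2 1 one_pos
    set f : ℝ → ℝ := fun x => v x / x - v (s * x) / (s * x) with hf
    have hb1 := hb_ev b 1 one_pos
    have hb1' := hb_ev (b/s) 1 one_pos
    -- two-sided eventual bounds on f
    have hbdd : (∃ C : ℝ, ∀ᶠ x : ℝ in atTop, f x ≤ C) ∧
        (∃ c : ℝ, ∀ᶠ x : ℝ in atTop, c ≤ f x) := by
      rcases lt_or_gt_of_ne hne with hlt | hgt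
      · have hev := ev_lt hv hab hs hlt
        refine ⟨⟨1 + a * (s⁻¹ - 1) + 1, ?_⟩, ⟨0, hev.mono fun x h => h.1⟩⟩
        filter_upwards [hev, hb1'] with x h1 h2
        show v x / x - v (s * x) / (s * x) ≤ 1 + a * (s⁻¹ - 1) + 1
        linarith [h1.2]
      · have hev := ev_gt hv hab hgt
        refine ⟨⟨0, hev.mono fun x h => h.1⟩, ⟨-(1 + a * (s - 1) + 1), ?_⟩⟩
        filter_upwards [hev, hb1] with x h1 h2
        show -(1 + a * (s - 1) + 1) ≤ v x / x - v (s * x) / (s * x)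
        have := h1.2; linarith
    obtain ⟨⟨C, hC⟩, ⟨c, hc⟩⟩ := hbdd
    -- rewrite hFun v s⁻¹ as liminf of -f
    have hmapeq : Filter.map (fun x : ℝ => s * x) atTop = atTop := by
      have h := OrderIso.map_atTop (OrderIso.mulLeft₀ s hs)
      exact h
    have hcomp : (fun x : ℝ => v x / x - v (s⁻¹ * x) / (s⁻¹ * x)) ∘ (fun x : ℝ => s * x)
        = fun x : ℝ => -(f x) := by
      funext x
      simp only [Function.comp_apply, hf, inv_mul_cancel_left₀ hs.ne']
      ring
    have hinv : hFun v s⁻¹ = liminf (fun x : ℝ => -(f x)) atTop := by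
      unfold hFun
      conv_lhs => rw [← hmapeq]
      rw [← liminf_comp, hcomp]
    -- conclude
    by_contra hcon
    push_neg at hcon
    set L1 := hFun v s with hL1
    set L2 := hFun v s⁻¹ with hL2
    set d := (L1 + L2) / 2 with hd
    have hd0 : 0 < d := by rw [hd]; linarith
    have hL1' : hFun v s = liminf f atTop := rfl
    have e1 : ∀ᶠ x : ℝ in atTop, L1 - d < f x := by
      refine eventually_lt_of_lt_liminf ?_ ⟨c, hc⟩
      rw [← hL1']; linarith
    have e2 : ∀ᶠ x : ℝ in atTop, L2 - d < -(f x) := by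
      refine eventually_lt_of_lt_liminf ?_ ?_
      · rw [← hinv]; linarith
      · exact ⟨-C, eventually_map.2 (hC.mono fun x h => neg_le_neg h)⟩
    obtain ⟨x, hx1, hx2⟩ := (e1.and e2).exists
    rw [hd] at hx1 hx2
    linarith
end

section
/- Let v belong to the class 𝓥 and define h_v(s) = liminf_{x→+∞}(v(x)/x − v(sx)/(sx)) for s > 0. Then for every s > 0, h_v(s) = liminf_{k→∞, k∈ℕ}(v(k)/k − v(⌊sk⌋+1)/(sk)). -/
open Filter

/-! Write `f x = v x / x - v (s x) / (s x)` and `g k = v k / k - v (⌊s k⌋ + 1) / (s k)`.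
By (V3) and monotonicity, moving the argument of `v` by a bounded amount changes `v y / x` by at
most `ε` once `x` is large. Hence `f k - ε ≤ g k` for large `k`; and since `v x / x` is
nondecreasing (convexity and `v 0 = 0`), also `g ⌊x⌋ - ε ≤ f x` for large `x`. Two functions that
dominate each other up to an arbitrary `ε`, along maps tending to infinity, have the same `liminf`,
even in the junk cases where the `liminf` is not finite. -/

lemma csSup_le_csSup_of_forall_sub_mem {S T : Set ℝ} (hS : S.Nonempty) (hT : BddAbove T)
    (h : ∀ ε > 0, ∀ a ∈ S, a - ε ∈ T) : sSup S ≤ sSup T :=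
  le_of_forall_pos_le_add fun ε hε => csSup_le hS fun a ha => by
    linarith [le_csSup hT (h ε hε a ha)]

lemma Real.sSup_eq_of_forall_sub_mem {S T : Set ℝ}
    (hST : ∀ ε > 0, ∀ a ∈ S, a - ε ∈ T) (hTS : ∀ ε > 0, ∀ a ∈ T, a - ε ∈ S) :
    sSup S = sSup T := by
  have transfer : ∀ {S T : Set ℝ}, (∀ ε > 0, ∀ a ∈ S, a - ε ∈ T) →
      (S.Nonempty → T.Nonempty) ∧ (BddAbove T → BddAbove S) := by
    intro S T h
    refine ⟨fun ⟨a, ha⟩ => ⟨a - 1, h 1 one_pos a ha⟩, fun ⟨c, hc⟩ => ⟨c + 1, fun a ha => ?_⟩⟩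
    linarith [hc (h 1 one_pos a ha)]
  by_cases hS : S.Nonempty ∧ BddAbove S
  · have hT : T.Nonempty ∧ BddAbove T := ⟨(transfer hST).1 hS.1, (transfer hTS).2 hS.2⟩
    exact le_antisymm (csSup_le_csSup_of_forall_sub_mem hS.1 hT.2 hST)
      (csSup_le_csSup_of_forall_sub_mem hT.1 hS.2 hTS)
  · have hT : ¬(T.Nonempty ∧ BddAbove T) :=
      fun hT => hS ⟨(transfer hTS).1 hT.1, (transfer hST).2 hT.2⟩
    rw [Real.sSup_def, Real.sSup_def, dif_neg hS, dif_neg hT]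

lemma Filter.liminf_eq_liminf_of_eventually_sub_le {α β : Type*} {la : Filter α} {lb : Filter β}
    {f : α → ℝ} {g : β → ℝ} {u : α → β} {w : β → α} (hu : Tendsto u la lb)
    (hw : Tendsto w lb la) (hfg : ∀ ε > 0, ∀ᶠ a in la, g (u a) - ε ≤ f a)
    (hgf : ∀ ε > 0, ∀ᶠ b in lb, f (w b) - ε ≤ g b) :
    liminf f la = liminf g lb := by
  rw [liminf_eq, liminf_eq]
  refine Real.sSup_eq_of_forall_sub_mem (fun ε hε c hc => ?_) (fun ε hε c hc => ?_)
  · filter_upwards [hw.eventually hc, hgf ε hε] with b hcb hb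
    linarith
  · filter_upwards [hu.eventually hc, hfg ε hε] with a hca ha
    linarith

lemma ConvexOn.div_le_div_of_map_zero {v : ℝ → ℝ} (hconv : ConvexOn ℝ (Set.Ici 0) v)
    (hzero : v 0 = 0) {a b : ℝ} (ha : 0 < a) (hab : a ≤ b) : v a / a ≤ v b / b := by
  simpa [hzero] using hconv.secant_mono Set.self_mem_Ici ha.le (ha.trans_le hab).le ha.ne'
    (ha.trans_le hab).ne' hab

namespace ClassV

variable {v : ℝ → ℝ}

lemma eventually_div_le_add (hv : ClassV v) (c : ℝ) {ε : ℝ} (hε : 0 < ε) :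
    ∀ᶠ x in atTop, ∀ y ∈ Set.Icc 0 (x + c), v y / x ≤ v x / x + ε := by
  obtain ⟨-, -, hmono, -, -, -, hV3⟩ := hv
  obtain ⟨a, -, b, hab⟩ := hV3 (ε / 2) (half_pos hε)
  set y₀ := max c 1
  set C := v y₀ + a * y₀ + b
  -- (V3) at `y₀` gives `v (x + y₀) ≤ v x + ε / 2 * x + C`, and `C ≤ ε / 2 * x` for large `x`.
  filter_upwards [eventually_ge_atTop (max 1 (2 * C / ε))] with x hx y ⟨hy, hyx⟩
  have hx₁ : 1 ≤ x := le_of_max_le_left hx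
  have hCx : C ≤ ε / 2 * x := by
    have := (div_le_iff₀ hε).1 (le_of_max_le_right hx)
    linarith
  have hy_le : v y ≤ v (x + y₀) :=
    hmono hy (show 0 ≤ x + y₀ by positivity) (by linarith [le_max_left c 1])
  have hshift := hab y₀ (le_max_right c 1) x hx₁
  rw [div_add' _ _ _ (by positivity), div_le_div_iff_of_pos_right (by positivity)]
  linarith

lemma eventually_div_le_div_floor (hv : ClassV v) {s ε : ℝ} (hs : 0 < s) (hε : 0 < ε) :
    ∀ᶠ x in atTop, v (s * x) / (s * x) ≤ v (⌊s * ⌊x⌋₊⌋₊ + 1) / (s * ⌊x⌋₊) + ε := by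
  have hfloor : Tendsto (fun x : ℝ => s * ⌊x⌋₊) atTop atTop :=
    (tendsto_natCast_atTop_atTop.comp tendsto_nat_floor_atTop).const_mul_atTop hs
  filter_upwards [hfloor.eventually (hv.eventually_div_le_add s hε), eventually_ge_atTop 1]
    with x hx hx₁
  obtain ⟨hnonneg, -, hmono, -⟩ := hv
  have hk : (0 : ℝ) < ⌊x⌋₊ := by exact_mod_cast Nat.floor_pos.2 hx₁
  have hkx : (⌊x⌋₊ : ℝ) ≤ x := Nat.floor_le (by linarith)
  have hxk : x ≤ ⌊x⌋₊ + 1 := (Nat.lt_floor_add_one x).le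
  have hsk : 0 < s * ⌊x⌋₊ := mul_pos hs hk
  calc v (s * x) / (s * x) ≤ v (s * x) / (s * ⌊x⌋₊) :=
        div_le_div_of_nonneg_left (hnonneg _ (by simp only [Set.mem_Ici]; positivity)) hsk
          (by gcongr)
    _ ≤ v (s * ⌊x⌋₊) / (s * ⌊x⌋₊) + ε := hx _ ⟨by positivity, by nlinarith⟩
    _ ≤ v (⌊s * ⌊x⌋₊⌋₊ + 1) / (s * ⌊x⌋₊) + ε := by
        gcongr
        exact hmono hsk.le (show (0 : ℝ) ≤ _ by positivity) (Nat.lt_floor_add_one _).le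

end ClassV

theorem stmt_18 (v : ℝ → ℝ) (hv : ClassV v) (s : ℝ) (hs : 0 < s) :
    Filter.liminf (fun x : ℝ => v x / x - v (s * x) / (s * x)) Filter.atTop =
    Filter.liminf
      (fun k : ℕ => v k / k - v ((⌊s * (k : ℝ)⌋₊ : ℝ) + 1) / (s * k)) Filter.atTop := by
  refine liminf_eq_liminf_of_eventually_sub_le tendsto_nat_floor_atTop
    tendsto_natCast_atTop_atTop (fun ε hε => ?_) (fun ε hε => ?_)
  · filter_upwards [hv.eventually_div_le_div_floor hs hε, eventually_ge_atTop 1] with x hx hx₁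
    have := hv.2.1.div_le_div_of_map_zero hv.2.2.2.1 (by exact_mod_cast Nat.floor_pos.2 hx₁)
      (Nat.floor_le (by linarith))
    linarith
  · have hsk : Tendsto (fun k : ℕ => s * (k : ℝ)) atTop atTop :=
      tendsto_natCast_atTop_atTop.const_mul_atTop hs
    filter_upwards [hsk.eventually (hv.eventually_div_le_add 1 hε)] with k hk
    have hsk₀ : 0 ≤ s * k := mul_nonneg hs.le k.cast_nonneg
    linarith [hk (⌊s * k⌋₊ + 1) ⟨by positivity, by linarith [Nat.floor_le hsk₀]⟩]
end

section
/- Let M = (M_k)_{k≥0} belong to the class 𝓜. Define w(r) = sup_{k∈ℤ, k≥0} ln(r^k/M_k) for r > 0 and w(0) = 0; define h(s) = liminf_{k→∞}(1/(sk))·ln(M_k^s/M_{⌊sk⌋+1}) for s > 0, and l(s) = exp(h(s)). Then for every s > 0 and every δ ∈ (0,1) there exists a constant Q(s,δ) ≥ 0 such that s·w(r) ≤ w(r/(l(s)·(1−δ))) + Q(s,δ) for all r ≥ 0. -/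
open Filter

open Real

/-! With `g = log M`, (i1) makes `g` convex with `g 0 = 0`, so `g n / n` is nondecreasing, and
(i4) makes `g` subadditive up to a linear error. Together they give
`g (⌊s k⌋ + 1) ≤ s g k + O(k)`, so the sequence whose liminf is `h(s)` is bounded below and
eventually exceeds `h(s) + log (1 - δ)`. For such `k` this trades the `k`-th term of `s w(r)`
for the `(⌊s k⌋ + 1)`-th term of `w (r / (l(s) (1 - δ)))`; the finitely many remaining `k` are
absorbed into `Q`. -/

section ConvexSequence

variable {g : ℕ → ℝ}

theorem le_mul_sub_of_monotone_sub (hg0 : g 0 = 0) (hg : Monotone fun n => g (n + 1) - g n)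
    {j m : ℕ} (hjm : j ≤ m + 1) : g j ≤ j * (g (m + 1) - g m) :=
  calc g j = ∑ i ∈ Finset.range j, (g (i + 1) - g i) := by
        rw [Finset.sum_range_sub, hg0, sub_zero]
    _ ≤ ∑ _i ∈ Finset.range j, (g (m + 1) - g m) :=
        Finset.sum_le_sum fun i hi => hg (by rw [Finset.mem_range] at hi; omega)
    _ = j * (g (m + 1) - g m) := by rw [Finset.sum_const, Finset.card_range, nsmul_eq_mul]

theorem mul_le_mul_of_monotone_sub (hg0 : g 0 = 0) (hg : Monotone fun n => g (n + 1) - g n)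
    {j m : ℕ} (hjm : j ≤ m) : (m : ℝ) * g j ≤ j * g m := by
  induction m, hjm using Nat.le_induction with
  | base => rfl
  | succ m hjm ih =>
    have := le_mul_sub_of_monotone_sub hg0 hg (j := j) (m := m) (by omega)
    push_cast
    linarith

theorem le_mul_of_almost_subadditive (hg0 : g 0 = 0) {C : ℝ} (hC : 0 ≤ C)
    (hsub : ∀ m n, g (m + n) ≤ g m + g n + C * (m + n + 1)) (i k : ℕ) :
    g (i * k) ≤ i * (g k + C * (i * k + 1)) := by
  induction i with
  | zero => simp [hg0]
  | succ i ih =>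
    have := hsub (i * k) k
    rw [Nat.succ_mul]
    push_cast at this ⊢
    nlinarith [mul_nonneg (mul_nonneg hC i.cast_nonneg) k.cast_nonneg]

theorem exists_le_mul_add_of_almost_subadditive (hg0 : g 0 = 0) (hg_nonneg : ∀ n, 0 ≤ g n)
    (hg : Monotone fun n => g (n + 1) - g n) {C : ℝ} (hC : 0 ≤ C)
    (hsub : ∀ m n, g (m + n) ≤ g m + g n + C * (m + n + 1)) {s : ℝ} (hs : 0 < s) :
    ∃ R, ∀ k : ℕ, 1 ≤ k → g (⌊s * k⌋₊ + 1) ≤ s * g k + R * k := by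
  set a := ⌈s⌉₊ + 1
  refine ⟨g 1 + 2 * C + C * (s + 1) * (a + 1), fun k hk => ?_⟩
  set j := ⌊s * k⌋₊ + 1
  have hk1 : (1 : ℝ) ≤ k := by exact_mod_cast hk
  have hsa : s + 1 ≤ (a : ℝ) := by
    simp only [a, Nat.cast_add, Nat.cast_one, add_le_add_iff_right, Nat.le_ceil]
  have hj : (j : ℝ) ≤ s * k + 1 := by
    simp only [j, Nat.cast_add, Nat.cast_one, add_le_add_iff_right]
    exact Nat.floor_le (by positivity)
  have hja : j ≤ a * k := by
    have : (j : ℝ) ≤ a * k := by nlinarith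
    exact_mod_cast this
  set X := g k + C * (a * k + 1)
  have hX : 0 ≤ X := add_nonneg (hg_nonneg k) (by positivity)
  -- Convexity compares `g j` with `g (a k)`, and iterating almost-subadditivity bounds that by
  -- `a X`.
  have hslope : (k : ℝ) * g j ≤ j * X := by
    have hconv := mul_le_mul_of_monotone_sub hg0 hg hja
    have hiter := le_mul_of_almost_subadditive hg0 hC hsub a k
    push_cast at hconv
    have ha : (0 : ℝ) < a := by linarith
    nlinarith [mul_le_mul_of_nonneg_left hiter (Nat.cast_nonneg (α := ℝ) j)]
  have hquad : g k ≤ k * (g 1 + C * (k + 1)) := by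
    simpa using le_mul_of_almost_subadditive hg0 hC hsub k 1
  have hk0 : (0 : ℝ) < k := by linarith
  refine le_of_mul_le_mul_left ?_ hk0
  have e1 : (k : ℝ) * (g 1 + C * (k + 1)) ≤ (g 1 + 2 * C) * (k * k) := by
    have hk2 : 0 ≤ (k - 1 : ℝ) * k := mul_nonneg (by linarith) hk0.le
    nlinarith [mul_nonneg hk2 (hg_nonneg 1), mul_nonneg hk2 hC]
  have e2 : C * (s * k + 1) * (a * k + 1) ≤ C * (s + 1) * (a + 1) * (k * k) := by
    calc C * (s * k + 1) * (a * k + 1) ≤ C * ((s + 1) * k) * ((a + 1) * k) := by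
          gcongr <;> linarith
      _ = C * (s + 1) * (a + 1) * (k * k) := by ring
  calc (k : ℝ) * g j ≤ (s * k + 1) * X := hslope.trans (mul_le_mul_of_nonneg_right hj hX)
    _ = k * (s * g k) + g k + C * (s * k + 1) * (a * k + 1) := by ring
    _ ≤ k * (s * g k + (g 1 + 2 * C + C * (s + 1) * (a + 1)) * k) := by linarith

end ConvexSequence

section LogSequence

variable {M : ℕ → ℝ}

theorem CondI1.monotone_log_sub (hpos : ∀ n, 0 < M n) (h : CondI1 M) :
    Monotone fun n => log (M (n + 1)) - log (M n) := by
  refine monotone_nat_of_le_succ fun n => ?_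
  have := log_le_log (pow_pos (hpos _) 2) (h n)
  rw [log_pow, log_mul (hpos n).ne' (hpos _).ne'] at this
  push_cast at this
  linarith

theorem CondI4.exists_log_almost_subadditive (hpos : ∀ n, 0 < M n) (h : CondI4 M) :
    ∃ C, 0 ≤ C ∧ ∀ m n : ℕ, log (M (m + n)) ≤ log (M m) + log (M n) + C * (m + n + 1) := by
  obtain ⟨p, hp, t, ht, h4⟩ := h 1 one_pos
  set C := max |log p| (max (log t) (log 2))
  refine ⟨C, (abs_nonneg _).trans (le_max_left _ _), fun m n => ?_⟩
  have htn : 0 < t ^ n := pow_pos (by linarith) n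
  have h2m : (0 : ℝ) < 2 ^ m := by positivity
  have hprod : M (m + n) ≤ p * t ^ n * M n * (M m * 2 ^ m) := by
    have := h4 n m
    rwa [div_le_iff₀ (mul_pos (hpos m) (by norm_num)), one_add_one_eq_two] at this
  have hlog := log_le_log (hpos _) hprod
  rw [log_mul (mul_pos (mul_pos hp htn) (hpos n)).ne' (mul_pos (hpos m) h2m).ne',
    log_mul (mul_pos hp htn).ne' (hpos n).ne', log_mul hp.ne' htn.ne',
    log_mul (hpos m).ne' h2m.ne', log_pow, log_pow] at hlog
  have hP : log p ≤ C := (le_abs_self _).trans (le_max_left _ _)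
  have hT : log t ≤ C := (le_max_left _ _).trans (le_max_right _ _)
  have hL : log 2 ≤ C := (le_max_right _ _).trans (le_max_right _ _)
  linarith [mul_le_mul_of_nonneg_left hT n.cast_nonneg, mul_le_mul_of_nonneg_left hL m.cast_nonneg]

theorem CondI2.bddAbove_range_log_div (hpos : ∀ n, 0 < M n) (h : CondI2 M) {r : ℝ}
    (hr : 0 < r) : BddAbove (Set.range fun k : ℕ => log (r ^ k / M k)) := by
  obtain ⟨H₁, hH₁, H₂, hH₂, hfac⟩ := h
  refine ⟨log (exp (r / H₂) / H₁), Set.forall_mem_range.2 fun k =>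
    log_le_log (div_pos (pow_pos hr k) (hpos k)) ?_⟩
  calc r ^ k / M k ≤ r ^ k / (H₁ * H₂ ^ k * k.factorial) := by gcongr; exact hfac k
    _ = (r / H₂) ^ k / k.factorial / H₁ := by rw [div_pow]; field_simp
    _ ≤ exp (r / H₂) / H₁ := by gcongr; exact pow_div_factorial_le_exp _ (by positivity) k

theorem ClassM.log_apply_nonneg (hM : ClassM M) (n : ℕ) : 0 ≤ log (M n) := by
  obtain ⟨-, hmono, h0, -⟩ := hM
  exact log_nonneg (h0 ▸ hmono n.zero_le)

theorem ClassM.mul_log_sub_log_le_iSup (hM : ClassM M) {ρ x : ℝ} (hρ : 0 < ρ) (hx : 0 ≤ x)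
    {j : ℕ} (hxj : x ≤ j) : x * log ρ - log (M j) ≤ ⨆ k : ℕ, log (ρ ^ k / M k) := by
  have hMj := hM.log_apply_nonneg j
  obtain ⟨hpos, -, h0, -, hi2, -, -⟩ := hM
  have hbdd := hi2.bddAbove_range_log_div hpos hρ
  rcases le_or_gt (log ρ) 0 with hρ1 | hρ1
  · calc x * log ρ - log (M j) ≤ log (ρ ^ 0 / M 0) := by
          rw [pow_zero, h0, div_one, log_one]
          linarith [mul_nonpos_of_nonneg_of_nonpos hx hρ1]
      _ ≤ _ := le_ciSup hbdd 0
  · calc x * log ρ - log (M j) ≤ j * log ρ - log (M j) := by gcongr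
      _ = log (ρ ^ j / M j) := by rw [log_div (by positivity) (hpos j).ne', log_pow]
      _ ≤ _ := le_ciSup hbdd j

-- Its liminf is the paper's `h(s)`.
noncomputable def growthQuotient (M : ℕ → ℝ) (s : ℝ) (k : ℕ) : ℝ :=
  1 / (s * k) * log (M k ^ s / M (⌊s * k⌋₊ + 1))

theorem growthQuotient_eq (hpos : ∀ n, 0 < M n) (s : ℝ) (k : ℕ) :
    growthQuotient M s k = (s * log (M k) - log (M (⌊s * k⌋₊ + 1))) / (s * k) := by
  rw [growthQuotient, log_div (rpow_pos_of_pos (hpos k) s).ne' (hpos _).ne', log_rpow (hpos k),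
    one_div_mul_eq_div]

theorem ClassM.isBoundedUnder_ge_growthQuotient (hM : ClassM M) {s : ℝ} (hs : 0 < s) :
    IsBoundedUnder (· ≥ ·) atTop (growthQuotient M s) := by
  have hg_nonneg := hM.log_apply_nonneg
  obtain ⟨hpos, -, h0, hi1, -, -, hi4⟩ := hM
  obtain ⟨C, hC, hsub⟩ := hi4.exists_log_almost_subadditive hpos
  obtain ⟨R, hR⟩ := exists_le_mul_add_of_almost_subadditive (by simp [h0]) hg_nonneg
    (hi1.monotone_log_sub hpos) hC hsub hs
  refine isBoundedUnder_of_eventually_ge (a := -R / s) ?_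
  filter_upwards [eventually_ge_atTop 1] with k hk
  have hk0 : (0 : ℝ) < k := by exact_mod_cast hk
  rw [growthQuotient_eq hpos, le_div_iff₀ (by positivity)]
  have := hR k hk
  calc -R / s * (s * k) = -(R * k) := by field_simp
    _ ≤ _ := by linarith

theorem ClassM.exists_mul_log_le_iSup_add (hM : ClassM M) {s b : ℝ} (hs : 0 < s)
    (hb : ∀ᶠ k in atTop, b < growthQuotient M s k) :
    ∃ Q, 0 ≤ Q ∧ ∀ ρ, 0 < ρ → ∀ k : ℕ,
      s * log ((ρ * exp b) ^ k / M k) ≤ (⨆ i : ℕ, log (ρ ^ i / M i)) + Q := by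
  obtain ⟨N₀, hN₀⟩ := eventually_atTop.1 hb
  set N := max N₀ 1
  set m := ⌈s * N⌉₊
  have hQ : 0 ≤ log (M m) + s * N * |b| := add_nonneg (hM.log_apply_nonneg m) (by positivity)
  refine ⟨_, hQ, fun ρ hρ k => ?_⟩
  have hlog : log ((ρ * exp b) ^ k / M k) = k * log ρ + k * b - log (M k) := by
    rw [log_div (by positivity) (hM.1 k).ne', log_pow, log_mul hρ.ne' (exp_pos b).ne', log_exp]
    ring
  rw [hlog]
  rcases lt_or_ge k N with hkN | hkN
  · have hMk := hM.log_apply_nonneg k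
    have hk : (k : ℝ) ≤ N := by exact_mod_cast hkN.le
    have hsup := hM.mul_log_sub_log_le_iSup hρ (x := s * k) (j := m) (by positivity)
      ((mul_le_mul_of_nonneg_left hk hs.le).trans (Nat.le_ceil _))
    have hb' : s * k * b ≤ s * N * |b| :=
      calc s * k * b ≤ s * k * |b| := by gcongr; exact le_abs_self b
        _ ≤ s * N * |b| := by gcongr
    linarith [mul_nonneg hs.le hMk]
  · have hk : (0 : ℝ) < k := by exact_mod_cast (le_max_right N₀ 1).trans hkN
    have hq := hN₀ k ((le_max_left _ _).trans hkN)
    rw [growthQuotient_eq hM.1, lt_div_iff₀ (by positivity)] at hq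
    have hsup := hM.mul_log_sub_log_le_iSup hρ (x := s * k) (j := ⌊s * k⌋₊ + 1) (by positivity)
      (by push_cast; exact (Nat.lt_floor_add_one _).le)
    linarith

end LogSequence

theorem stmt_19 (M : ℕ → ℝ) (hM : ClassM M) (w : ℝ → ℝ)
    (hw : ∀ r : ℝ, 0 < r → w r = ⨆ k : ℕ, Real.log (r ^ k / M k))
    (hw0 : w 0 = 0) (s δ : ℝ) (hs : 0 < s) (hδ : δ ∈ Set.Ioo (0 : ℝ) 1) :
    ∃ Q : ℝ, 0 ≤ Q ∧ ∀ r : ℝ, 0 ≤ r →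
      s * w r ≤
        w (r / (Real.exp (Filter.liminf
          (fun k : ℕ => 1 / (s * k) *
            Real.log ((M k) ^ s / M (⌊s * (k : ℝ)⌋₊ + 1))) Filter.atTop) * (1 - δ))) + Q := by
  change ∃ Q : ℝ, 0 ≤ Q ∧ ∀ r : ℝ, 0 ≤ r →
    s * w r ≤ w (r / (exp (liminf (growthQuotient M s) atTop) * (1 - δ))) + Q
  set h := liminf (growthQuotient M s) atTop
  have hδ' : 0 < 1 - δ := sub_pos.2 hδ.2
  have hb : ∀ᶠ k in atTop, h + log (1 - δ) < growthQuotient M s k :=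
    eventually_lt_of_lt_liminf (by linarith [log_neg hδ' (by linarith [hδ.1])])
      (hM.isBoundedUnder_ge_growthQuotient hs)
  obtain ⟨Q, hQ, hQle⟩ := hM.exists_mul_log_le_iSup_add hs hb
  refine ⟨Q, hQ, fun r hr => ?_⟩
  rcases hr.eq_or_lt with rfl | hr
  · simp [hw0, hQ]
  have hρ : 0 < r / (exp h * (1 - δ)) := by positivity
  have hr' : r / (exp h * (1 - δ)) * exp (h + log (1 - δ)) = r := by
    rw [exp_add, exp_log hδ']
    field_simp
  rw [hw r hr, hw _ hρ, mul_iSup_of_nonneg hs.le]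
  refine ciSup_le fun k => ?_
  have := hQle _ hρ k
  rwa [hr'] at this
end
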